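/- arXiv:1011.3574 — 11 statements merged into one kernel-verified Lean document; each statement's English description precedes it below -/
import Mathlib

section
/- Let X be a topological space such that the lattice O_X of open subsets of X, endowed with the Scott topology, is a core compact topological space. Then X is infraconsonant. -/
open TopologicalSpace

/-- A subset of a complete lattice is *Scott open* if it is an upper set and every
nonempty directed subset whose supremum belongs to it meets it. -/
def ScottOpen {L : Type*} [CompleteLattice L] (A : Set L) : Prop :=
  IsUpperSet A ∧
    ∀ D : Set L, D.Nonempty → DirectedOn (· ≤ ·) D → sSup D ∈ A → (D ∩ A).Nonempty

/-- The Scott topology on a complete lattice. -/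
def scottTopology (L : Type*) [CompleteLattice L] : TopologicalSpace L where
  IsOpen := ScottOpen
  isOpen_univ := ⟨isUpperSet_univ, fun D hD _ _ => by simpa using hD⟩
  isOpen_inter := fun A B hA hB => by
    refine ⟨hA.1.inter hB.1, fun D hD hdir hsup => ?_⟩
    obtain ⟨a, haD, haA⟩ := hA.2 D hD hdir hsup.1
    obtain ⟨b, hbD, hbB⟩ := hB.2 D hD hdir hsup.2
    obtain ⟨c, hcD, hac, hbc⟩ := hdir a haD b hbD
    exact ⟨c, hcD, hA.1 hac haA, hB.1 hbc hbB⟩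
  isOpen_sUnion := fun S hS => by
    constructor
    · intro a b hab ha
      obtain ⟨t, htS, hat⟩ := ha
      exact ⟨t, htS, (hS t htS).1 hab hat⟩
    · intro D hD hdir hsup
      obtain ⟨t, htS, hst⟩ := hsup
      obtain ⟨d, hdD, hdt⟩ := (hS t htS).2 D hD hdir hst
      exact ⟨d, hdD, t, htS, hdt⟩

/-- A topological space is *core compact* if for every point `x` and open set `U ∋ x`
there is an open `V ∋ x` such that every open cover of `U` has a finite subfamily
covering `V`. -/
def CoreCompact (Y : Type*) [TopologicalSpace Y] : Prop :=
  ∀ (x : Y) (U : Set Y), IsOpen U → x ∈ U →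
    ∃ V : Set Y, IsOpen V ∧ x ∈ V ∧
      ∀ 𝒰 : Set (Set Y), (∀ W ∈ 𝒰, IsOpen W) → U ⊆ ⋃₀ 𝒰 →
        ∃ F : Finset (Set Y), ↑F ⊆ 𝒰 ∧ V ⊆ ⋃₀ ↑F

/-- A topological space is *infraconsonant* if every nonempty Scott-open family `𝒜`
of open sets admits a nonempty Scott-open family `𝒞` with `𝒞 ∨ 𝒞 ⊆ 𝒜`. -/
def Infraconsonant (X : Type*) [TopologicalSpace X] : Prop :=
  ∀ A : Set (Opens X), A.Nonempty → ScottOpen A →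
    ∃ C : Set (Opens X), C.Nonempty ∧ ScottOpen C ∧
      {w : Opens X | ∃ c ∈ C, ∃ d ∈ C, w = c ⊓ d} ⊆ A

section WB
variable {L : Type*} [CompleteLattice L]

def WB (V U : Set L) : Prop :=
  ∀ 𝒰 : Set (Set L), (∀ W ∈ 𝒰, ScottOpen W) → U ⊆ ⋃₀ 𝒰 →
    ∃ F : Finset (Set L), ↑F ⊆ 𝒰 ∧ V ⊆ ⋃₀ ↑F

theorem WB.mono_right {V U U' : Set L} (h : WB V U) (hUU : U ⊆ U') : WB V U' :=
  fun 𝒰 h𝒰 hcov => h 𝒰 h𝒰 (hUU.trans hcov)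

theorem WB.mono_left {V V' U : Set L} (hVV : V' ⊆ V) (h : WB V U) : WB V' U := by
  intro 𝒰 h𝒰 hcov
  obtain ⟨F, hF, hVF⟩ := h 𝒰 h𝒰 hcov
  exact ⟨F, hF, hVV.trans hVF⟩

theorem WB.subset {V U : Set L} (hU : ScottOpen U) (h : WB V U) : V ⊆ U := by
  obtain ⟨F, hF, hVF⟩ := h {U} (by rintro W rfl; exact hU) (Set.subset_sUnion_of_mem rfl)
  refine hVF.trans ?_
  intro x hx
  obtain ⟨t, htF, hxt⟩ := hx
  have : t = U := hF htF
  exact this ▸ hxt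

theorem WB.finsetSUnion {F : Finset (Set L)} {U : Set L}
    (h : ∀ W ∈ F, WB W U) : WB (⋃₀ ↑F) U := by
  classical
  intro 𝒰 h𝒰 hcov
  choose G hG1 hG2 using fun (p : {W // W ∈ F}) => h p.1 p.2 𝒰 h𝒰 hcov
  refine ⟨F.attach.biUnion G, ?_, ?_⟩
  · intro t ht
    simp only [Finset.coe_biUnion, Set.mem_iUnion] at ht
    obtain ⟨p, _, hp⟩ := ht
    exact hG1 p hp
  · intro x hx
    obtain ⟨W, hWF, hxW⟩ := hx
    obtain ⟨t, htG, hxt⟩ := hG2 ⟨W, hWF⟩ hxW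
    refine ⟨t, ?_, hxt⟩
    simp only [Finset.coe_biUnion, Set.mem_iUnion]
    exact ⟨⟨W, hWF⟩, Finset.mem_attach _ _, htG⟩

theorem directedOn_finset_le {D : Set L} (hne : D.Nonempty) (hdir : DirectedOn (· ≤ ·) D)
    (s : Finset L) (hs : ↑s ⊆ D) : ∃ d ∈ D, ∀ x ∈ s, x ≤ d := by
  classical
  induction s using Finset.induction_on with
  | empty => obtain ⟨d, hd⟩ := hne; exact ⟨d, hd, by simp⟩
  | @insert a t hx ih =>
    have hts : ↑t ⊆ D := fun y hy => hs (by simp [hy])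
    obtain ⟨d, hdD, hd⟩ := ih hts
    have haD : a ∈ D := hs (by simp)
    obtain ⟨e, heD, hae, hde⟩ := hdir a haD d hdD
    refine ⟨e, heD, ?_⟩
    intro x hxmem
    rcases Finset.mem_insert.1 hxmem with rfl | hxt
    · exact hae
    · exact (hd x hxt).trans hde

/-- In a core compact Scott topology, the way-below relation interpolates. -/
theorem wb_interpolate (h : @CoreCompact L (scottTopology L))
    {V U : Set L} (hU : ScottOpen U) (hVU : WB V U) :
    ∃ M : Set L, ScottOpen M ∧ WB V M ∧ WB M U := by
  classical
  set 𝒰 : Set (Set L) := {W | ScottOpen W ∧ ∃ W', ScottOpen W' ∧ WB W W' ∧ WB W' U} with h𝒰def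
  have hcov : U ⊆ ⋃₀ 𝒰 := by
    intro x hx
    obtain ⟨W', hW'open, hxW', hW'U⟩ := h x U hU hx
    obtain ⟨W, hWopen, hxW, hWW'⟩ := h x W' hW'open hxW'
    exact ⟨W, ⟨hWopen, W', hW'open, hWW', hW'U⟩, hxW⟩
  obtain ⟨F, hF𝒰, hVF⟩ := hVU 𝒰 (fun W hW => hW.1) hcov
  have hF : ∀ W ∈ F, ∃ W', ScottOpen W' ∧ WB W W' ∧ WB W' U :=
    fun W hW => (hF𝒰 hW).2
  choose g hg1 hg2 hg3 using hF
  set FG : Finset (Set L) := F.attach.image (fun p => g p.1 p.2) with hFGdef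
  refine ⟨⋃₀ ↑FG, ?_, ?_, ?_⟩
  · exact (scottTopology L).isOpen_sUnion _ (by
      intro t ht
      simp only [hFGdef, Finset.coe_image, Set.mem_image] at ht
      obtain ⟨p, _, rfl⟩ := ht
      exact hg1 p.1 p.2)
  · refine WB.mono_left hVF (WB.finsetSUnion ?_)
    intro W hW
    refine (hg2 W hW).mono_right ?_
    intro x hx
    exact ⟨g W hW, by
      simp only [hFGdef, Finset.coe_image, Set.mem_image]
      exact ⟨⟨W, hW⟩, by simp, rfl⟩, hx⟩
  · refine WB.finsetSUnion ?_
    intro t ht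
    simp only [hFGdef, Finset.mem_image] at ht
    obtain ⟨p, _, rfl⟩ := ht
    exact hg3 p.1 p.2

end WB

/-- If the lattice of open sets of `X`, with the Scott topology, is a core compact
topological space, then `X` is infraconsonant. -/
theorem scottCoreCompact_infraconsonant {X : Type*} [TopologicalSpace X]
    (h : @CoreCompact (Opens X) (scottTopology (Opens X))) :
    Infraconsonant X := by
  classical
  rintro A ⟨a0, ha0⟩ hA
  have htop : (⊤ : Opens X) ∈ A := hA.1 le_top ha0
  obtain ⟨V, hVopen, hVtop, hVA⟩ := h ⊤ A hA htop
  have hVopen' : ScottOpen V := hVopen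
  have hVA' : WB V A := hVA
  set AU : Opens X → Set (Opens X) := fun U => {W | U ⊓ W ∈ A} with hAUdef
  have hAUmono : ∀ {U U' : Opens X}, U ≤ U' → AU U ⊆ AU U' := by
    intro U U' hUU W hW
    exact hA.1 (inf_le_inf_right W hUU) hW
  have hAUopen : ∀ U : Opens X, ScottOpen (AU U) := by
    intro U
    constructor
    · intro W W' hWW hW
      exact hA.1 (inf_le_inf_left U hWW) hW
    · intro D hD hdir hsup
      have : U ⊓ sSup D = sSup ((fun d => U ⊓ d) '' D) := by
        rw [sSup_image, inf_sSup_eq]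
      have hsup' : sSup ((fun d => U ⊓ d) '' D) ∈ A := by
        rw [← this]; exact hsup
      have hdir' : DirectedOn (· ≤ ·) ((fun d => U ⊓ d) '' D) := by
        rintro _ ⟨d, hd, rfl⟩ _ ⟨d', hd', rfl⟩
        obtain ⟨e, he, hde, hd'e⟩ := hdir d hd d' hd'
        exact ⟨U ⊓ e, ⟨e, he, rfl⟩, inf_le_inf_left U hde, inf_le_inf_left U hd'e⟩
      obtain ⟨_, ⟨d, hdD, rfl⟩, hdA⟩ := hA.2 _ (hD.image _) hdir' hsup'
      exact ⟨d, hdD, hdA⟩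
  have hAtop : AU ⊤ = A := by
    ext W; simp [hAUdef]
  set C : Set (Opens X) := V ∩ {U | WB V (AU U)} with hCdef
  have hCopen2 : ScottOpen {U : Opens X | WB V (AU U)} := by
    constructor
    · intro U U' hUU hU
      exact hU.mono_right (hAUmono hUU)
    · intro D hD hdir hsup
      have hVAS : WB V (AU (sSup D)) := hsup
      obtain ⟨M, hMopen, hVM, hMAS⟩ := wb_interpolate h (hAUopen _) hVAS
      have hcov : AU (sSup D) ⊆ ⋃₀ (AU '' D) := by
        intro W hW
        have : sSup D ⊓ W = sSup ((fun d => d ⊓ W) '' D) := by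
          rw [sSup_image, sSup_inf_eq]
        have hsup' : sSup ((fun d => d ⊓ W) '' D) ∈ A := by rw [← this]; exact hW
        have hdir' : DirectedOn (· ≤ ·) ((fun d => d ⊓ W) '' D) := by
          rintro _ ⟨d, hd, rfl⟩ _ ⟨d', hd', rfl⟩
          obtain ⟨e, he, hde, hd'e⟩ := hdir d hd d' hd'
          exact ⟨e ⊓ W, ⟨e, he, rfl⟩, inf_le_inf_right W hde, inf_le_inf_right W hd'e⟩
        obtain ⟨_, ⟨d, hdD, rfl⟩, hdA⟩ := hA.2 _ (hD.image _) hdir' hsup'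
        exact ⟨AU d, ⟨d, hdD, rfl⟩, hdA⟩
      obtain ⟨F, hF, hMF⟩ := hMAS (AU '' D) (by rintro _ ⟨d, _, rfl⟩; exact hAUopen d) hcov
      have hFsets : ∀ t ∈ F, ∃ d ∈ D, AU d = t := fun t ht => hF ht
      choose dd hdd1 hdd2 using hFsets
      set s : Finset (Opens X) := F.attach.image (fun p => dd p.1 p.2) with hsdef
      have hsD : ↑s ⊆ D := by
        intro y hy
        simp only [hsdef, Finset.coe_image, Set.mem_image] at hy
        obtain ⟨p, _, rfl⟩ := hy
        exact hdd1 p.1 p.2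
      obtain ⟨d, hdD, hdbound⟩ := directedOn_finset_le hD hdir s hsD
      refine ⟨d, hdD, ?_⟩
      have hMAd : M ⊆ AU d := by
        refine hMF.trans ?_
        intro x hx
        obtain ⟨t, htF, hxt⟩ := hx
        have hmem : dd t htF ∈ s := by
          simp only [hsdef, Finset.mem_image]
          exact ⟨⟨t, htF⟩, Finset.mem_attach _ _, rfl⟩
        have : AU (dd t htF) ⊆ AU d := hAUmono (hdbound _ hmem)
        exact this (by rw [hdd2 t htF]; exact hxt)
      exact hVM.mono_right hMAd
  refine ⟨C, ⟨⊤, hVtop, ?_⟩, ?_, ?_⟩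
  · show WB V (AU ⊤)
    rw [hAtop]; exact hVA'
  · exact (scottTopology (Opens X)).isOpen_inter _ _ hVopen' hCopen2
  · rintro w ⟨c, hc, d, hd, rfl⟩
    have hVAc : V ⊆ AU c := (hc.2 : WB V (AU c)).subset (hAUopen c)
    exact hVAc hd.1
end

section
/- Let X be a topological space such that the lattice O_X of open subsets of X, endowed with the Scott topology, is a core compact topological space. Then the binary intersection map ∩ : O_X × O_X → O_X is jointly continuous, where the domain carries the product of the Scott topologies on each factor and the codomain carries the Scott topology. -/
open TopologicalSpace

/-!
Write `𝒱 ≪ 𝒲` (`WayBelow`) when every open cover of `𝒲` has a finite subfamily covering `𝒱`;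
core compactness says that every point of an open `𝒲` lies in an open `𝒱 ≪ 𝒲`, and it yields
interpolation `𝒱 ≪ W ≪ 𝒲`.

Let `A` be Scott open with `u ⊓ v ∈ A`. Since `⊓` distributes over directed joins, the section
`S v = {u' | u' ⊓ v ∈ A}` is Scott open, so core compactness gives a Scott open `𝒱 ∋ u` with
`𝒱 ≪ S v`. The box `𝒱 × N` with `N = {v' | 𝒱 ≪ S v'}` maps into `A`, and `N` is Scott open:
`S (sSup D)` is the directed union of the `S d`, so interpolating `𝒱 ≪ W ≪ S (sSup D)` puts
`W`, hence `𝒱`, inside a single `S d`.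
-/

section WayBelow

variable {Y : Type*} [TopologicalSpace Y] {A B : Set Y}

def WayBelow (A B : Set Y) : Prop :=
  ∀ 𝒰 : Set (Set Y), (∀ W ∈ 𝒰, IsOpen W) → B ⊆ ⋃₀ 𝒰 →
    ∃ F : Finset (Set Y), ↑F ⊆ 𝒰 ∧ A ⊆ ⋃₀ ↑F

theorem WayBelow.mono {A' B' : Set Y} (h : WayBelow A B) (hA : A' ⊆ A) (hB : B ⊆ B') :
    WayBelow A' B' := fun 𝒰 h𝒰 hcov =>
  (h 𝒰 h𝒰 (hB.trans hcov)).imp fun _ ⟨hF, hAF⟩ => ⟨hF, hA.trans hAF⟩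

theorem WayBelow.subset_of_isOpen (h : WayBelow A B) (hB : IsOpen B) : A ⊆ B := by
  obtain ⟨F, hF, hAF⟩ := h {B} (by simpa using hB) (by simp)
  exact hAF.trans (Set.sUnion_subset fun W hW => (hF hW).le)

theorem WayBelow.of_subset_biUnion {ι : Type*} {s : Finset ι} {f : ι → Set Y}
    (hA : A ⊆ ⋃ i ∈ s, f i) (hf : ∀ i ∈ s, WayBelow (f i) B) : WayBelow A B := by
  classical
  intro 𝒰 h𝒰 hcov
  choose! F hF𝒰 hfF using fun i (hi : i ∈ s) => hf i hi 𝒰 h𝒰 hcov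
  refine ⟨s.biUnion F, by simpa using hF𝒰, hA.trans <| Set.iUnion₂_subset fun i hi => ?_⟩
  exact (hfF i hi).trans <| Set.sUnion_mono <| by
    simpa using Set.subset_biUnion_of_mem (u := fun j => (F j : Set (Set Y))) hi

theorem WayBelow.exists_subset_of_directedOn {𝒰 : Set (Set Y)} (h : WayBelow A B)
    (h𝒰 : ∀ W ∈ 𝒰, IsOpen W) (hne : 𝒰.Nonempty) (hdir : DirectedOn (· ⊆ ·) 𝒰)
    (hcov : B ⊆ ⋃₀ 𝒰) : ∃ W ∈ 𝒰, A ⊆ W := by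
  obtain ⟨F, hF𝒰, hAF⟩ := h 𝒰 h𝒰 hcov
  -- `F` is a finite subset of `⋃ W ∈ 𝒰, 𝒫 W`, a directed union of powersets.
  have hpow : DirectedOn (fun U V => 𝒫 U ⊆ 𝒫 V) 𝒰 := hdir.mono fun _ _ => Set.powerset_mono.2
  obtain ⟨W, hW𝒰, hFW⟩ := hpow.exists_mem_subset_of_finset_subset_biUnion hne (s := F)
    fun f hf => Set.mem_biUnion (hF𝒰 hf) (Set.mem_powerset subset_rfl)
  exact ⟨W, hW𝒰, hAF.trans (Set.sUnion_subset hFW)⟩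

/-- Interpolation: cover `B` by the open sets `V'` admitting some `V` with `V' ≪ V ≪ B`. -/
theorem CoreCompact.exists_wayBelow_wayBelow (hY : CoreCompact Y) (h : WayBelow A B)
    (hB : IsOpen B) : ∃ W, WayBelow A W ∧ WayBelow W B := by
  set 𝒰 := {V' | IsOpen V' ∧ ∃ V, WayBelow V' V ∧ WayBelow V B}
  have hcov : B ⊆ ⋃₀ 𝒰 := fun x hx => by
    obtain ⟨V, hV, hxV, hVB⟩ := hY x B hB hx
    obtain ⟨V', hV', hxV', hV'V⟩ := hY x V hV hxV
    exact ⟨V', ⟨hV', V, hV'V, hVB⟩, hxV'⟩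
  obtain ⟨F, hF𝒰, hAF⟩ := h 𝒰 (fun _ hW => hW.1) hcov
  choose! g hfg hgB using fun f (hf : f ∈ F) => (hF𝒰 hf).2
  have hAF' : A ⊆ ⋃ f ∈ F, id f := by simpa [Set.sUnion_eq_biUnion] using hAF
  refine ⟨⋃ f ∈ F, g f, .of_subset_biUnion hAF' fun f hf => ?_, .of_subset_biUnion subset_rfl hgB⟩
  exact (hfg f hf).mono subset_rfl (Set.subset_biUnion_of_mem (u := g) hf)

end WayBelow

theorem ScottOpen.preimage {L M : Type*} [CompleteLattice L] [CompleteLattice M] {f : L → M}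
    (hf : ScottContinuous f) {A : Set M} (hA : ScottOpen A) : ScottOpen (f ⁻¹' A) := by
  refine ⟨hA.1.preimage hf.monotone, fun D hD hdir hsup => ?_⟩
  have hsup' : sSup (f '' D) ∈ A := hf.map_sSup hD hdir ▸ hsup
  obtain ⟨_, ⟨d, hdD, rfl⟩, hdA⟩ :=
    hA.2 _ (hD.image f) (hdir.mono_comp fun _ _ h => hf.monotone h) hsup'
  exact ⟨d, hdD, hdA⟩

section Frame

variable {L : Type*} [Order.Frame L] {A : Set L}

local instance : TopologicalSpace L := scottTopology L

theorem isOpen_preimage_inf_left (hA : IsOpen A) (u : L) : IsOpen ((u ⊓ ·) ⁻¹' A) :=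
  ScottOpen.preimage (.of_map_sSup fun _ _ _ => by rw [inf_sSup_eq, sSup_image]) hA

theorem isOpen_preimage_inf_right (hA : IsOpen A) (v : L) : IsOpen ((· ⊓ v) ⁻¹' A) :=
  ScottOpen.preimage (.of_map_sSup fun _ _ _ => by rw [sSup_inf_eq, sSup_image]) hA

theorem preimage_inf_sSup_subset (hA : IsOpen A) {D : Set L} (hD : D.Nonempty)
    (hdir : DirectedOn (· ≤ ·) D) : (· ⊓ sSup D) ⁻¹' A ⊆ ⋃₀ ((fun d => (· ⊓ d) ⁻¹' A) '' D) :=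
  fun u hu =>
    let ⟨d, hdD, hdA⟩ := (isOpen_preimage_inf_left hA u).2 D hD hdir hu
    ⟨_, ⟨d, hdD, rfl⟩, hdA⟩

theorem CoreCompact.isOpen_setOf_wayBelow_preimage_inf (hL : CoreCompact L) (hA : IsOpen A)
    (𝒱 : Set L) : IsOpen {v | WayBelow 𝒱 ((· ⊓ v) ⁻¹' A)} := by
  have hmono : Monotone fun v : L => (· ⊓ v) ⁻¹' A :=
    fun v v' hvv' u hu => hA.1 (inf_le_inf_left u hvv') hu
  refine ⟨fun v v' hvv' hv => hv.mono subset_rfl (hmono hvv'), fun D hD hdir hsup => ?_⟩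
  obtain ⟨W, h𝒱W, hW⟩ := hL.exists_wayBelow_wayBelow hsup (isOpen_preimage_inf_right hA _)
  obtain ⟨_, ⟨d, hdD, rfl⟩, hWd⟩ := hW.exists_subset_of_directedOn
    (by rintro _ ⟨d, -, rfl⟩; exact isOpen_preimage_inf_right hA d) (hD.image _)
    (hdir.mono_comp fun _ _ h => hmono h) (preimage_inf_sSup_subset hA hD hdir)
  exact ⟨d, hdD, h𝒱W.mono subset_rfl hWd⟩

theorem CoreCompact.continuous_inf (hL : CoreCompact L) :
    Continuous fun p : L × L => p.1 ⊓ p.2 := by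
  refine continuous_def.2 fun A hA => isOpen_prod_iff.2 fun u v huv => ?_
  obtain ⟨𝒱, h𝒱, hu𝒱, h𝒱v⟩ := hL u _ (isOpen_preimage_inf_right hA v) huv
  refine ⟨𝒱, _, h𝒱, hL.isOpen_setOf_wayBelow_preimage_inf hA 𝒱, hu𝒱, h𝒱v, ?_⟩
  rintro ⟨u', v'⟩ ⟨hu', hv'⟩
  exact (hv' : WayBelow 𝒱 _).subset_of_isOpen (isOpen_preimage_inf_right hA v') hu'

end Frame

/-- If the lattice of open sets of `X`, with the Scott topology, is a core compact
topological space, then binary intersection is jointly continuous from the product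
of the Scott topologies to the Scott topology. -/
theorem scottCoreCompact_inter_continuous {X : Type*} [TopologicalSpace X]
    (h : @CoreCompact (Opens X) (scottTopology (Opens X))) :
    @Continuous (Opens X × Opens X) (Opens X)
      (@instTopologicalSpaceProd _ _ (scottTopology (Opens X)) (scottTopology (Opens X)))
      (scottTopology (Opens X))
      (fun p => p.1 ⊓ p.2) :=
  letI := scottTopology (Opens X)
  h.continuous_inf
end

section
/- Let X be a topological space and endow the set O_X of open subsets of X with the topology whose subbase consists of the sets 𝒪(K) = {U ∈ O_X : K ⊆ U}, where K ranges over the compact subsets of X (this is the compact-open topology under the identification of O_X with the continuous maps from X to the Sierpiński space). If this topological space is core compact, then X is locally compact, i.e., every point of X has a neighborhood base consisting of compact sets. -/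
open TopologicalSpace
/-- The topology on the set of open subsets of `X` whose subbase consists of the sets
`𝒪(K) = {U open : K ⊆ U}` for `K` compact (the compact-open topology under the
identification with `C(X, Sierpiński)`). -/
def compactOpenOpens (X : Type*) [TopologicalSpace X] : TopologicalSpace (Opens X) :=
  TopologicalSpace.generateFrom
    {S : Set (Opens X) | ∃ K : Set X, IsCompact K ∧ S = {U : Opens X | K ⊆ (U : Set X)}}

/-- If the space of open subsets of `X` with the compact-open topology is core compact,
then `X` is locally compact, i.e. every point has a neighborhood base of compact sets. -/
theorem compactOpenOpens_coreCompact_locallyCompact {X : Type*} [TopologicalSpace X]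
    (h : @CoreCompact (Opens X) (compactOpenOpens X)) :
    LocallyCompactSpace X := by
  constructor
  intro x n hn
  rw [mem_nhds_iff] at hn
  obtain ⟨U, hUn, hUopen, hxU⟩ := hn
  letI t : TopologicalSpace (Opens X) := compactOpenOpens X
  set 𝒪 : Set X → Set (Opens X) := fun K => {V : Opens X | K ⊆ (V : Set X)} with h𝒪
  have hsub : ∀ K : Set X, IsCompact K → IsOpen (𝒪 K) := by
    intro K hK
    exact TopologicalSpace.GenerateOpen.basic _ ⟨K, hK, rfl⟩
  set Uo : Opens X := ⟨U, hUopen⟩ with hUo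
  obtain ⟨𝒱, h𝒱open, hU𝒱, hcov⟩ := h Uo (𝒪 {x}) (hsub _ isCompact_singleton)
    (by simp [h𝒪, hUo, Set.singleton_subset_iff, hxU])
  -- find basic 𝒪 K inside 𝒱 around Uo
  have hbasis := TopologicalSpace.isTopologicalBasis_of_subbasis (t := t) rfl
  obtain ⟨B, hBmem, hUB, hB𝒱⟩ := hbasis.exists_subset_of_mem_open hU𝒱 h𝒱open
  obtain ⟨f, ⟨hffin, hfsub⟩, rfl⟩ := hBmem
  classical
  let kf : Set (Opens X) → Set X := fun S =>
    if hS : ∃ K' : Set X, IsCompact K' ∧ S = 𝒪 K' then hS.choose else ∅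
  have hkf : ∀ S ∈ f, IsCompact (kf S) ∧ S = 𝒪 (kf S) := by
    intro S hS
    have hex := hfsub hS
    have hkfS : kf S = hex.choose := dif_pos hex
    rw [hkfS]
    exact hex.choose_spec
  set K : Set X := {x} ∪ ⋃ S ∈ f, kf S with hKdef
  have hKcpt : IsCompact K := by
    refine isCompact_singleton.union (hffin.isCompact_biUnion ?_)
    intro S hS; exact (hkf S hS).1
  have hKU : K ⊆ U := by
    rintro y (rfl | hy)
    · exact hxU
    · obtain ⟨S, hS, hyS⟩ := Set.mem_iUnion₂.mp hy
      have := (hkf S hS).2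
      have hUoS : Uo ∈ S := Set.mem_sInter.mp hUB S hS
      rw [this] at hUoS
      exact hUoS hyS
  have hxK : x ∈ K := Or.inl rfl
  have h𝒪K𝒱 : 𝒪 K ⊆ 𝒱 := by
    intro V hV
    refine hB𝒱 ?_
    intro S hS
    rw [(hkf S hS).2]
    intro y hy
    exact hV (Or.inr (Set.mem_biUnion hS hy))
  -- saturation of K
  set satK : Set X := ⋂₀ {W : Set X | IsOpen W ∧ K ⊆ W} with hsat
  have hKsat : K ⊆ satK := fun y hy W hW => hW.2 hy
  have hsatU : satK ⊆ U := fun y hy => hy U ⟨hUopen, hKU⟩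
  have hsatcpt : IsCompact satK := by
    rw [isCompact_iff_finite_subcover]
    intro ι Us hUs hcover
    obtain ⟨tt, htt⟩ := hKcpt.elim_finite_subcover Us hUs (hKsat.trans hcover)
    refine ⟨tt, ?_⟩
    intro y hy
    exact hy (⋃ i ∈ tt, Us i) ⟨isOpen_biUnion fun i _ => hUs i, htt⟩
  -- satK is a neighborhood of x
  have hnbhd : ∃ W : Set X, IsOpen W ∧ x ∈ W ∧ W ⊆ satK := by
    by_contra hno
    push_neg at hno
    set 𝒰 : Set (Set (Opens X)) :=
      {S | ∃ Q : Set X, IsCompact Q ∧ x ∈ Q ∧ ¬ Q ⊆ satK ∧ S = 𝒪 Q} with h𝒰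
    have h𝒰open : ∀ W ∈ 𝒰, IsOpen W := by
      rintro W ⟨Q, hQ, _, _, rfl⟩
      exact hsub Q hQ
    have h𝒰cov : 𝒪 {x} ⊆ ⋃₀ 𝒰 := by
      intro V hV
      have hxV : x ∈ (V : Set X) := hV rfl
      obtain ⟨y, hyV, hysat⟩ := Set.not_subset.mp (hno V V.isOpen hxV)
      refine ⟨𝒪 {x, y}, ⟨{x, y}, (Set.toFinite {x, y}).isCompact, Or.inl rfl,
        fun hc => hysat (hc (Or.inr rfl)), rfl⟩, ?_⟩
      rintro z (rfl | rfl)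
      · exact hxV
      · exact hyV
    obtain ⟨F, hF𝒰, h𝒱F⟩ := hcov 𝒰 h𝒰open h𝒰cov
    -- for each S ∈ F, pick an open ⊇ K not in S
    have hwit : ∀ S ∈ (F : Set (Set (Opens X))), ∃ V : Opens X, K ⊆ ↑V ∧ V ∉ S := by
      intro S hS
      obtain ⟨Q, hQ, hxQ, hQsat, rfl⟩ := hF𝒰 hS
      obtain ⟨z, hzQ, hzsat⟩ := Set.not_subset.mp hQsat
      rw [hsat, Set.mem_sInter] at hzsat
      push_neg at hzsat
      obtain ⟨W, hWmem, hzW⟩ := hzsat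
      obtain ⟨hWopen, hKW⟩ := hWmem
      exact ⟨⟨W, hWopen⟩, hKW, fun hc => hzW (hc hzQ)⟩
    let wo : Set (Opens X) → Opens X := fun S =>
      if hS : ∃ V : Opens X, K ⊆ ↑V ∧ V ∉ S then hS.choose else ⊤
    have hwo : ∀ S ∈ (F : Set (Set (Opens X))), K ⊆ ↑(wo S) ∧ wo S ∉ S := by
      intro S hS
      have hex := hwit S hS
      simp only [wo, dif_pos hex]
      exact hex.choose_spec
    set Vstar : Opens X := Uo ⊓ F.inf wo with hVstar
    have hKVstar : Vstar ∈ 𝒪 K := by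
      intro y hy
      refine ⟨hKU hy, ?_⟩
      rw [Opens.coe_finset_inf, Finset.inf_set_eq_iInter]
      exact Set.mem_iInter₂.mpr fun S hS => (hwo S hS).1 hy
    have hVstar𝒱 : Vstar ∈ ⋃₀ (F : Set (Set (Opens X))) := h𝒱F (h𝒪K𝒱 hKVstar)
    obtain ⟨S, hSF, hVS⟩ := hVstar𝒱
    obtain ⟨Q, hQ, hxQ, hQsat, hSQ⟩ := hF𝒰 hSF
    have hVle : Vstar ≤ wo S := le_trans inf_le_right (Finset.inf_le hSF)
    rw [hSQ] at hVS
    have h2 : wo S ∈ 𝒪 Q := fun y hy => hVle (hVS hy)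
    rw [← hSQ] at h2
    exact (hwo S hSF).2 h2
  obtain ⟨W, hWopen, hxW, hWsat⟩ := hnbhd
  exact ⟨satK, mem_nhds_iff.mpr ⟨W, hWsat, hWopen, hxW⟩, hsatU.trans hUn, hsatcpt⟩
end

section
/- Let X be a consonant topological space such that the lattice O_X of open subsets of X, endowed with the Scott topology, is a core compact topological space. Then X is locally compact, i.e., every point of X has a neighborhood base consisting of compact sets. -/
open TopologicalSpace

/-- A topological space is *consonant* if every Scott-open family of open sets is
compactly generated. -/
def Consonant (X : Type*) [TopologicalSpace X] : Prop :=
  ∀ A : Set (Opens X), ScottOpen A →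
    ∀ U ∈ A, ∃ K : Set X, IsCompact K ∧ K ⊆ (U : Set X) ∧
      ∀ V : Opens X, K ⊆ (V : Set X) → V ∈ A

/-- If `X` is consonant and the lattice of open sets of `X`, with the Scott topology,
is a core compact topological space, then `X` is locally compact. -/
theorem consonant_scottCoreCompact_locallyCompact {X : Type*} [TopologicalSpace X]
    (hcons : Consonant X)
    (h : @CoreCompact (Opens X) (scottTopology (Opens X))) :
    LocallyCompactSpace X := by
  constructor
  intro x n hn
  obtain ⟨U, hUn, hUopen, hxU⟩ := mem_nhds_iff.mp hn
  -- the family of opens containing `x` is Scott open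
  have point_scottOpen : ∀ p : X, ScottOpen {V : Opens X | p ∈ V} := by
    intro p
    constructor
    · intro V V' hle hV
      exact hle hV
    · intro D hD hdir hsup
      obtain ⟨V, hVD, hxV⟩ := Opens.mem_sSup.mp hsup
      exact ⟨V, hVD, hxV⟩
  have hAopen : ScottOpen {V : Opens X | x ∈ V} := point_scottOpen x
  -- apply core compactness of the Scott topology at the point `U`
  obtain ⟨𝒱, h𝒱open, hU𝒱, hsub⟩ :=
    h ⟨U, hUopen⟩ {V : Opens X | x ∈ V} hAopen hxU
  -- apply consonance to the Scott-open family `𝒱`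
  obtain ⟨K, hKc, hKU, hK𝒱⟩ := hcons 𝒱 h𝒱open ⟨U, hUopen⟩ hU𝒱
  -- the saturation of `K`
  set S : Set X := ⋂₀ {W : Set X | IsOpen W ∧ K ⊆ W} with hSdef
  have hKS : K ⊆ S := fun p hp => by
    intro W hW
    exact hW.2 hp
  have hSU : S ⊆ U := Set.sInter_subset_of_mem ⟨hUopen, hKU⟩
  have hScomp : IsCompact S := by
    apply isCompact_of_finite_subcover
    intro ι Uc hUc hcov
    obtain ⟨t, ht⟩ := hKc.elim_finite_subcover Uc hUc (hKS.trans hcov)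
    exact ⟨t, Set.sInter_subset_of_mem ⟨isOpen_biUnion fun i _ => hUc i, ht⟩⟩
  have hxint : x ∈ interior S := by
    by_contra hx
    -- cover the Scott-open set `{V | x ∈ V}` by the sets `{V | p ∈ V}` for `p ∉ S`
    set 𝒰 : Set (Set (Opens X)) := (fun p : X => {V : Opens X | p ∈ V}) '' Sᶜ with h𝒰def
    have hcov : {V : Opens X | x ∈ V} ⊆ ⋃₀ 𝒰 := by
      intro V hV
      have hns : ¬ (V : Set X) ⊆ S := fun hsub' =>
        hx (mem_interior.mpr ⟨V, hsub', V.2, hV⟩)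
      obtain ⟨p, hpV, hpS⟩ := Set.not_subset.mp hns
      exact ⟨{V' : Opens X | p ∈ V'}, ⟨p, hpS, rfl⟩, hpV⟩
    have hopen : ∀ W ∈ 𝒰, @IsOpen (Opens X) (scottTopology (Opens X)) W := by
      rintro _ ⟨p, _, rfl⟩
      exact point_scottOpen p
    obtain ⟨F, hF𝒰, hF⟩ := hsub 𝒰 hopen hcov
    -- choose witnessing points and avoiding open sets for elements of `F`
    have hchoice : ∀ i : {f : Set (Opens X) // f ∈ F},
        ∃ p : X, ∃ W : Set X, (i : Set (Opens X)) = {V : Opens X | p ∈ V} ∧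
          IsOpen W ∧ K ⊆ W ∧ p ∉ W := by
      rintro ⟨f, hf⟩
      obtain ⟨p, hp, hfe⟩ := hF𝒰 hf
      rw [hSdef, Set.mem_compl_iff, Set.mem_sInter] at hp
      push_neg at hp
      obtain ⟨W, ⟨hWo, hKW⟩, hpW⟩ := hp
      exact ⟨p, W, hfe.symm, hWo, hKW, hpW⟩
    choose pt Wf hfe hWopen hKW hptW using hchoice
    -- the open set `U ∩ ⋂ i, Wf i` contains `K`, hence lies in `𝒱`
    set Wstar : Set X := U ∩ ⋂ i, Wf i with hWstar
    have hWstarOpen : IsOpen Wstar :=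
      hUopen.inter (isOpen_iInter_of_finite fun i => hWopen i)
    have hKWstar : K ⊆ Wstar := fun p hp =>
      ⟨hKU hp, Set.mem_iInter.mpr fun i => hKW i hp⟩
    have hmem : (⟨Wstar, hWstarOpen⟩ : Opens X) ∈ 𝒱 := hK𝒱 _ hKWstar
    obtain ⟨f, hfF, hVf⟩ := hF hmem
    have hfF' : f ∈ F := hfF
    set i : {f : Set (Opens X) // f ∈ F} := ⟨f, hfF'⟩ with hi
    rw [show f = (i : Set (Opens X)) from rfl, hfe i] at hVf
    -- `hVf : pt i ∈ Wstar`, contradicting `pt i ∉ Wf i`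
    exact hptW i (Set.mem_iInter.mp hVf.2 i)
  exact ⟨S, mem_interior_iff_mem_nhds.mp hxint, hSU.trans hUn, hScomp⟩
end

section
/- A topological space X is infraconsonant if and only if the Scott topology on the product lattice O_X × O_X and the product of the Scott topologies on the two factors O_X coincide at the point (X,X); that is, a subset of O_X × O_X is a neighborhood of (X,X) in the Scott topology of the product lattice if and only if it is a neighborhood of (X,X) in the product of the Scott topologies. -/
open TopologicalSpace

lemma scottOpen_fst_preimage {L M : Type*} [CompleteLattice L] [CompleteLattice M]
    {A : Set L} (hA : ScottOpen A) : ScottOpen (Prod.fst ⁻¹' A : Set (L × M)) := by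
  constructor
  · intro p q hpq hp; exact hA.1 hpq.1 hp
  · intro D hD hdir hsup
    have hdir' : DirectedOn (· ≤ ·) (Prod.fst '' D) := by
      rintro _ ⟨d, hd, rfl⟩ _ ⟨e, he, rfl⟩
      obtain ⟨f, hf, h1, h2⟩ := hdir d hd e he
      exact ⟨f.1, ⟨f, hf, rfl⟩, h1.1, h2.1⟩
    have h1 : sSup (Prod.fst '' D) ∈ A := by rw [← Prod.fst_sSup]; exact hsup
    obtain ⟨a, ⟨d, hdD, rfl⟩, haA⟩ := hA.2 _ (hD.image _) hdir' h1
    exact ⟨d, hdD, haA⟩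

lemma scottOpen_snd_preimage {L M : Type*} [CompleteLattice L] [CompleteLattice M]
    {A : Set M} (hA : ScottOpen A) : ScottOpen (Prod.snd ⁻¹' A : Set (L × M)) := by
  constructor
  · intro p q hpq hp; exact hA.1 hpq.2 hp
  · intro D hD hdir hsup
    have hdir' : DirectedOn (· ≤ ·) (Prod.snd '' D) := by
      rintro _ ⟨d, hd, rfl⟩ _ ⟨e, he, rfl⟩
      obtain ⟨f, hf, h1, h2⟩ := hdir d hd e he
      exact ⟨f.2, ⟨f, hf, rfl⟩, h1.2, h2.2⟩
    have h1 : sSup (Prod.snd '' D) ∈ A := by rw [← Prod.snd_sSup]; exact hsup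
    obtain ⟨a, ⟨d, hdD, rfl⟩, haA⟩ := hA.2 _ (hD.image _) hdir' h1
    exact ⟨d, hdD, haA⟩


section Helpers
variable {α β : Type*}

lemma mem_nhds_iff'' (t : TopologicalSpace α) {a : α} {s : Set α} :
    s ∈ @nhds α t a ↔ ∃ u, u ⊆ s ∧ t.IsOpen u ∧ a ∈ u := by
  letI := t
  exact mem_nhds_iff

lemma isOpen_prod' (t₁ : TopologicalSpace α) (t₂ : TopologicalSpace β) {s : Set α} {u : Set β}
    (hs : t₁.IsOpen s) (hu : t₂.IsOpen u) :
    (@instTopologicalSpaceProd _ _ t₁ t₂).IsOpen (s ×ˢ u) := by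
  letI := t₁; letI := t₂
  exact IsOpen.prod hs hu

lemma mem_nhds_prod_iffX (t₁ : TopologicalSpace α) (t₂ : TopologicalSpace β) {a : α} {b : β}
    {s : Set (α × β)} :
    s ∈ @nhds (α × β) (@instTopologicalSpaceProd _ _ t₁ t₂) (a, b) ↔
      ∃ u ∈ @nhds α t₁ a, ∃ v ∈ @nhds β t₂ b, u ×ˢ v ⊆ s := by
  letI := t₁; letI := t₂
  exact mem_nhds_prod_iff

lemma scottOpen_mem_nhds {L : Type*} [CompleteLattice L] {A : Set L} (hA : ScottOpen A)
    {a : L} (ha : a ∈ A) : A ∈ @nhds L (scottTopology L) a := by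
  letI := scottTopology L
  exact IsOpen.mem_nhds hA ha

end Helpers

lemma scott_le_prod (L M : Type*) [CompleteLattice L] [CompleteLattice M] :
    scottTopology (L × M) ≤
      @instTopologicalSpaceProd _ _ (scottTopology L) (scottTopology M) := by
  refine le_inf ?_ ?_
  · rw [TopologicalSpace.le_def]
    rintro s ⟨u, hu, rfl⟩
    exact scottOpen_fst_preimage hu
  · rw [TopologicalSpace.le_def]
    rintro s ⟨u, hu, rfl⟩
    exact scottOpen_snd_preimage hu

/-- `X` is infraconsonant iff the Scott topology of the product lattice `O_X × O_X` and
the product of the Scott topologies of the factors have the same neighborhoods at the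
point `(X, X)`, i.e. the two neighborhood filters at `(⊤, ⊤)` coincide. -/
theorem infraconsonant_iff_nhds_eq {X : Type*} [TopologicalSpace X] :
    Infraconsonant X ↔
      @nhds (Opens X × Opens X) (scottTopology (Opens X × Opens X)) (⊤, ⊤) =
        @nhds (Opens X × Opens X)
          (@instTopologicalSpaceProd _ _ (scottTopology (Opens X)) (scottTopology (Opens X)))
          (⊤, ⊤) := by
  set tS := scottTopology (Opens X × Opens X) with htS
  set tP := @instTopologicalSpaceProd _ _ (scottTopology (Opens X)) (scottTopology (Opens X))
    with htP
  have hle : @nhds _ tS (⊤, ⊤) ≤ @nhds _ tP (⊤, ⊤) :=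
    nhds_mono (scott_le_prod (Opens X) (Opens X))
  constructor
  · intro h
    refine le_antisymm hle (fun s hs => ?_)
    obtain ⟨t, hts, htopen, hmem⟩ := (mem_nhds_iff'' tS).mp hs
    have htopen' : ScottOpen t := htopen
    -- A: the diagonal trace of t
    set A : Set (Opens X) := {U | (U, U) ∈ t} with hAdef
    have hAupper : IsUpperSet A := fun U V hUV hU => htopen'.1 ⟨hUV, hUV⟩ hU
    have hAscott : ScottOpen A := by
      refine ⟨hAupper, fun D hD hdir hsup => ?_⟩
      set E : Set (Opens X × Opens X) := (fun U => (U, U)) '' D with hEdef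
      have hEsup : sSup E = (sSup D, sSup D) := by
        ext : 1
        · rw [Prod.fst_sSup]
          congr 1
          ext U; constructor
          · rintro ⟨_, ⟨V, hV, rfl⟩, rfl⟩; exact hV
          · intro hU; exact ⟨(U, U), ⟨U, hU, rfl⟩, rfl⟩
        · rw [Prod.snd_sSup]
          congr 1
          ext U; constructor
          · rintro ⟨_, ⟨V, hV, rfl⟩, rfl⟩; exact hV
          · intro hU; exact ⟨(U, U), ⟨U, hU, rfl⟩, rfl⟩
      have hEdir : DirectedOn (· ≤ ·) E := by
        rintro _ ⟨d, hd, rfl⟩ _ ⟨e, he, rfl⟩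
        obtain ⟨f, hf, h1, h2⟩ := hdir d hd e he
        exact ⟨(f, f), ⟨f, hf, rfl⟩, ⟨h1, h1⟩, ⟨h2, h2⟩⟩
      obtain ⟨_, ⟨d, hdD, rfl⟩, hdt⟩ :=
        htopen'.2 E (hD.image _) hEdir (by rw [hEsup]; exact hsup)
      exact ⟨d, hdD, hdt⟩
    obtain ⟨C, hCne, hCscott, hCC⟩ := h A ⟨⊤, hAupper le_top (by exact hmem)⟩ hAscott
    have hCtop : (⊤ : Opens X) ∈ C := hCscott.1 le_top hCne.choose_spec
    refine (mem_nhds_iff'' tP).mpr ⟨C ×ˢ C, ?_, ?_, ⟨hCtop, hCtop⟩⟩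
    · intro p hp
      have : p.1 ⊓ p.2 ∈ A := hCC ⟨p.1, hp.1, p.2, hp.2, rfl⟩
      exact hts (htopen'.1 (show (p.1 ⊓ p.2, p.1 ⊓ p.2) ≤ p from ⟨inf_le_left, inf_le_right⟩) this)
    · exact isOpen_prod' (scottTopology (Opens X)) (scottTopology (Opens X)) hCscott hCscott
  · intro heq A hAne hAscott
    have hAtop : (⊤ : Opens X) ∈ A := hAscott.1 le_top hAne.choose_spec
    set T : Set (Opens X × Opens X) := {p | p.1 ⊓ p.2 ∈ A} with hTdef
    have hTscott : ScottOpen T := by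
      refine ⟨fun p q hpq hp => hAscott.1 (inf_le_inf hpq.1 hpq.2) hp, ?_⟩
      intro D hD hdir hsup
      set E : Set (Opens X) := (fun p : Opens X × Opens X => p.1 ⊓ p.2) '' D with hEdef
      have hEdir : DirectedOn (· ≤ ·) E := by
        rintro _ ⟨d, hd, rfl⟩ _ ⟨e, he, rfl⟩
        obtain ⟨f, hf, h1, h2⟩ := hdir d hd e he
        exact ⟨f.1 ⊓ f.2, ⟨f, hf, rfl⟩, inf_le_inf h1.1 h1.2, inf_le_inf h2.1 h2.2⟩
      have hkey : (sSup D).1 ⊓ (sSup D).2 ≤ sSup E := by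
        rw [Prod.fst_sSup, Prod.snd_sSup, sSup_inf_sSup]
        refine iSup₂_le fun p hp => ?_
        obtain ⟨d, hd, h1⟩ := hp.1
        obtain ⟨e, he, h2⟩ := hp.2
        obtain ⟨f, hf, hdf, hef⟩ := hdir d hd e he
        calc p.1 ⊓ p.2 = d.1 ⊓ e.2 := by rw [h1, h2]
          _ ≤ f.1 ⊓ f.2 := inf_le_inf hdf.1 hef.2
          _ ≤ sSup E := le_sSup ⟨f, hf, rfl⟩
      obtain ⟨_, ⟨d, hdD, rfl⟩, hdA⟩ :=
        hAscott.2 E (hD.image _) hEdir (hAscott.1 hkey hsup)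
      exact ⟨d, hdD, hdA⟩
    have hTnhds : T ∈ @nhds _ tS (⊤, ⊤) :=
      scottOpen_mem_nhds hTscott (show ((⊤:Opens X) ⊓ ⊤) ∈ A by simpa using hAtop)
    rw [heq] at hTnhds
    obtain ⟨u, hu, v, hv, huv⟩ :=
      (mem_nhds_prod_iffX (scottTopology (Opens X)) (scottTopology (Opens X))).mp hTnhds
    obtain ⟨S, hSu, hSopen, hStop⟩ := (mem_nhds_iff'' (scottTopology (Opens X))).mp hu
    obtain ⟨S', hS'v, hS'open, hS'top⟩ := (mem_nhds_iff'' (scottTopology (Opens X))).mp hv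
    refine ⟨S ∩ S', ⟨⊤, hStop, hS'top⟩,
      (scottTopology (Opens X)).isOpen_inter S S' hSopen hS'open, ?_⟩
    rintro w ⟨c, hc, d, hd, rfl⟩
    exact huv (Set.mk_mem_prod (hSu hc.1) (hS'v hd.2))
end

section
/- Every core compact topological space is injectively core compact. -/
open TopologicalSpace
/-- The adherence of a filter: its set of cluster points. -/
def adh {Y : Type*} [TopologicalSpace Y] (F : Filter Y) : Set Y :=
  {y | ClusterPt y F}

/-- The infimum (in the order where a filter is smaller when it is coarser, i.e. has
fewer sets) of a family of filters: the coarsest filter contained in every member,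
whose elements are exactly the sets belonging to all members, equivalently the sets
`⋃ᵢ Hᵢ` with `Hᵢ ∈ ℋᵢ`.  In Mathlib's order on filters this is the supremum. -/
def filterInfimum {Y : Type*} (H : Set (Filter Y)) : Filter Y :=
  sSup H

/-- A topological space is *injectively core compact* if for every `x`, every open
`U ∋ x` and every family `ℍ` of filters admitting an injection `θ` of `ℍ` into the
open supersets of `U` with `adh ℋ ∩ θ ℋ = ∅` for all `ℋ ∈ ℍ`, the point `x` is not a
cluster point of the infimum filter `⋀_{ℋ ∈ ℍ} ℋ`. -/
def InjCoreCompact (Y : Type*) [TopologicalSpace Y] : Prop :=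
  ∀ (x : Y) (U : Set Y), IsOpen U → x ∈ U →
    ∀ (H : Set (Filter Y)) (θ : Filter Y → Set Y),
      (∀ F ∈ H, IsOpen (θ F) ∧ U ⊆ θ F) →
      Set.InjOn θ H →
      (∀ F ∈ H, adh F ∩ θ F = ∅) →
      x ∉ adh (filterInfimum H)

open Filter Topology

/-! Given `x ∈ U`, take `V ∋ x` from core compactness. A filter `ℋ ∈ ℍ` has no cluster
point in `U ⊆ θ ℋ`, so the open sets whose complements lie in `ℋ` cover `U`; finitely
many of them cover `V`, hence `Vᶜ ∈ ℋ`. Thus `Vᶜ` belongs to every member of `ℍ`, hence to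
their infimum, and `x` cannot be a cluster point of it. -/

theorem compl_mem_of_finite_subcover_of_forall_not_clusterPt {X : Type*} [TopologicalSpace X]
    {U V : Set X} {F : Filter X}
    (hVU : ∀ 𝒰 : Set (Set X), (∀ W ∈ 𝒰, IsOpen W) → U ⊆ ⋃₀ 𝒰 →
      ∃ G : Finset (Set X), ↑G ⊆ 𝒰 ∧ V ⊆ ⋃₀ ↑G)
    (hU : ∀ y ∈ U, ¬ClusterPt y F) : Vᶜ ∈ F := by
  have hcover : U ⊆ ⋃₀ {W | IsOpen W ∧ Wᶜ ∈ F} := by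
    intro y hy
    obtain ⟨W, ⟨hyW, hW⟩, hWc⟩ :=
      (nhds_basis_opens y).disjoint_iff_left.1 (clusterPt_iff_not_disjoint.not_left.1 (hU y hy))
    exact ⟨W, ⟨hW, hWc⟩, hyW⟩
  obtain ⟨G, hG, hVG⟩ := hVU _ (fun W hW => hW.1) hcover
  have hGc : (⋃₀ (G : Set (Set X)))ᶜ ∈ F := by
    rw [Set.sUnion_eq_biUnion, Set.compl_iUnion₂]
    exact (biInter_finset_mem G).2 fun W hW => (hG hW).2
  exact mem_of_superset hGc (Set.compl_subset_compl.2 hVG)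

/-- Every core compact topological space is injectively core compact. -/
theorem coreCompact_injCoreCompact {X : Type*} [TopologicalSpace X]
    (h : CoreCompact X) : InjCoreCompact X := by
  intro x U hU hxU H θ hθ _ hadh hx
  obtain ⟨V, hV, hxV, hVU⟩ := h x U hU hxU
  have hVc : Vᶜ ∈ filterInfimum H := mem_sSup.2 fun F hF =>
    compl_mem_of_finite_subcover_of_forall_not_clusterPt hVU fun y hy hyF =>
      (hadh F hF).subset ⟨hyF, (hθ F hF).2 hy⟩
  obtain ⟨z, hzV, hzVc⟩ := clusterPt_iff_nonempty.1 hx (hV.mem_nhds hxV) hVc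
  exact hzVc hzV
end

section
/- Let X be a completely regular topological space. Then X is infraconsonant if and only if the binary intersection map ∩ : O_X × O_X → O_X is jointly continuous, where the domain carries the product of the Scott topologies on each factor and the codomain carries the Scott topology. -/
open TopologicalSpace

theorem top_mem_scottOpen {L : Type*} [CompleteLattice L] {A : Set L}
    (h : ScottOpen A) (hne : A.Nonempty) : ⊤ ∈ A := by
  obtain ⟨a, ha⟩ := hne
  exact h.1 le_top ha

/-- For a completely regular space `X`: `X` is infraconsonant iff binary intersection
`∩ : O_X × O_X → O_X` is jointly continuous for the product of the Scott topologies on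
the domain and the Scott topology on the codomain. -/
theorem infraconsonant_iff_inter_continuous {X : Type*} [TopologicalSpace X]
    [CompletelyRegularSpace X] :
    Infraconsonant X ↔
      @Continuous (Opens X × Opens X) (Opens X)
        (@instTopologicalSpaceProd _ _ (scottTopology (Opens X)) (scottTopology (Opens X)))
        (scottTopology (Opens X))
        (fun p => p.1 ⊓ p.2) := by
  letI T := scottTopology (Opens X)
  constructor
  · intro hinf
    rw [continuous_def]
    intro A hA
    have hA' : ScottOpen A := hA
    rw [isOpen_prod_iff]
    intro U V hUV
    have hUV : U ⊓ V ∈ A := hUV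
    -- Step 1: find S ∈ A with closure S ⊆ U ∩ V, using regularity.
    set D : Set (Opens X) := {W | closure (W : Set X) ⊆ ((U ⊓ V : Opens X) : Set X)} with hD
    have hDne : D.Nonempty := ⟨⊥, by simp [hD]⟩
    have hDdir : DirectedOn (· ≤ ·) D := by
      rintro a ha b hb
      refine ⟨a ⊔ b, ?_, le_sup_left, le_sup_right⟩
      simp only [hD, Set.mem_setOf_eq, Opens.coe_sup, closure_union]
      exact Set.union_subset ha hb
    have hDsup : sSup D = U ⊓ V := by
      apply le_antisymm
      · exact sSup_le fun W hW => SetLike.coe_subset_coe.mp (subset_closure.trans hW)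
      · intro x hx
        obtain ⟨t, ht, htc, hts⟩ :=
          exists_mem_nhds_isClosed_subset ((U ⊓ V).isOpen.mem_nhds hx)
        refine Opens.mem_sSup.mpr ⟨⟨interior t, isOpen_interior⟩, ?_, ?_⟩
        · show closure (interior t) ⊆ _
          calc closure (interior t) ⊆ closure t := closure_mono interior_subset
            _ = t := htc.closure_eq
            _ ⊆ _ := hts
        · exact mem_interior_iff_mem_nhds.mpr ht
    obtain ⟨S, hSD, hSA⟩ := hA'.2 D hDne hDdir (hDsup ▸ hUV)
    have hScl : closure (S : Set X) ⊆ ((U ⊓ V : Opens X) : Set X) := hSD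
    set E : Opens X := ⟨(closure (S : Set X))ᶜ, isClosed_closure.isOpen_compl⟩ with hE
    -- Step 2: B = {W | W ⊓ S ∈ A} is Scott open and contains ⊤.
    set B : Set (Opens X) := {W | W ⊓ S ∈ A} with hB
    have hBscott : ScottOpen B := by
      constructor
      · intro a b hab ha
        exact hA'.1 (inf_le_inf_right S hab) ha
      · intro D' hD'ne hD'dir hD'sup
        have himg : sSup ((· ⊓ S) '' D') = sSup D' ⊓ S := by
          rw [sSup_image, sSup_inf_eq]
        obtain ⟨w, hw, hwA⟩ := hA'.2 ((· ⊓ S) '' D')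
          (hD'ne.image _)
          (by rintro _ ⟨a, ha, rfl⟩ _ ⟨b, hb, rfl⟩
              obtain ⟨c, hc, hac, hbc⟩ := hD'dir a ha b hb
              exact ⟨c ⊓ S, ⟨c, hc, rfl⟩, inf_le_inf_right S hac, inf_le_inf_right S hbc⟩)
          (himg ▸ hD'sup)
        obtain ⟨d, hd, rfl⟩ := hw
        exact ⟨d, hd, hwA⟩
    have hBtop : (⊤ : Opens X) ∈ B := by
      show ⊤ ⊓ S ∈ A
      rw [top_inf_eq]
      exact hSA
    obtain ⟨C, hCne, hCscott, hCprod⟩ := hinf B ⟨⊤, hBtop⟩ hBscott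
    have hCtop : (⊤ : Opens X) ∈ C := top_mem_scottOpen hCscott hCne
    -- Step 3: C₁ = {W | W ⊔ E ∈ C} works as a neighborhood of both U and V.
    set C₁ : Set (Opens X) := {W | W ⊔ E ∈ C} with hC₁
    have hC₁scott : ScottOpen C₁ := by
      constructor
      · intro a b hab ha
        exact hCscott.1 (sup_le_sup_right hab E) ha
      · intro D' hD'ne hD'dir hD'sup
        have himg : sSup ((· ⊔ E) '' D') = sSup D' ⊔ E := by
          apply le_antisymm
          · refine sSup_le ?_
            rintro _ ⟨a, ha, rfl⟩
            exact sup_le_sup_right (le_sSup ha) E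
          · refine sup_le (sSup_le fun d hd => le_sup_left.trans (le_sSup ⟨d, hd, rfl⟩)) ?_
            obtain ⟨d, hd⟩ := hD'ne
            exact le_sup_right.trans (le_sSup ⟨d, hd, rfl⟩)
        obtain ⟨w, hw, hwC⟩ := hCscott.2 ((· ⊔ E) '' D')
          (hD'ne.image _)
          (by rintro _ ⟨a, ha, rfl⟩ _ ⟨b, hb, rfl⟩
              obtain ⟨c, hc, hac, hbc⟩ := hD'dir a ha b hb
              exact ⟨c ⊔ E, ⟨c, hc, rfl⟩, sup_le_sup_right hac E, sup_le_sup_right hbc E⟩)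
          (himg ▸ hD'sup)
        obtain ⟨d, hd, rfl⟩ := hw
        exact ⟨d, hd, hwC⟩
    have hmem : ∀ W : Opens X, closure (S : Set X) ⊆ (W : Set X) → W ∈ C₁ := by
      intro W hW
      have : W ⊔ E = ⊤ := by
        rw [eq_top_iff]
        intro x _
        show x ∈ (↑(W ⊔ E) : Set X)
        rw [Opens.coe_sup]
        by_cases hx : x ∈ closure (S : Set X)
        · exact Or.inl (hW hx)
        · exact Or.inr hx
      show W ⊔ E ∈ C
      rw [this]
      exact hCtop
    have hUC₁ : U ∈ C₁ := hmem U (hScl.trans fun x hx => hx.1)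
    have hVC₁ : V ∈ C₁ := hmem V (hScl.trans fun x hx => hx.2)
    refine ⟨C₁, C₁, hC₁scott, hC₁scott, hUC₁, hVC₁, ?_⟩
    rintro ⟨c₁, c₂⟩ ⟨h1, h2⟩
    have hw : ((c₁ ⊔ E) ⊓ (c₂ ⊔ E)) ⊓ S ∈ A := hCprod ⟨c₁ ⊔ E, h1, c₂ ⊔ E, h2, rfl⟩
    show c₁ ⊓ c₂ ∈ A
    refine hA'.1 ?_ hw
    intro x hx
    obtain ⟨⟨hx1, hx2⟩, hxS⟩ := hx
    have hxF : x ∈ closure (S : Set X) := subset_closure hxS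
    have hx1'' : x ∈ (↑c₁ : Set X) ∪ (↑E : Set X) := by rw [← Opens.coe_sup]; exact hx1
    have hx2'' : x ∈ (↑c₂ : Set X) ∪ (↑E : Set X) := by rw [← Opens.coe_sup]; exact hx2
    have hx1' : x ∈ c₁ := hx1''.resolve_right fun h => h hxF
    have hx2' : x ∈ c₂ := hx2''.resolve_right fun h => h hxF
    exact ⟨hx1', hx2'⟩
  · intro hcont A hAne hAscott
    have hAtop : (⊤ : Opens X) ∈ A := top_mem_scottOpen hAscott hAne
    have hopen := (continuous_def.mp hcont) A hAscott
    rw [isOpen_prod_iff] at hopen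
    obtain ⟨u, v, hu, hv, hTu, hTv, hsub⟩ := hopen ⊤ ⊤ (by show ⊤ ⊓ ⊤ ∈ A; rwa [top_inf_eq])
    refine ⟨u ∩ v, ⟨⊤, hTu, hTv⟩, hu.inter hv, ?_⟩
    rintro w ⟨c, hc, d, hd, rfl⟩
    exact hsub (Set.mk_mem_prod hc.1 hd.2)
end

section
/- There exists a T₀ topological space that is injectively core compact but not core compact. -/
open TopologicalSpace
/-!
Let `B` be the initial well order of cardinality `𝔠⁺` and add a point `∞` to `B × ℕ`: the point
`(γ, j)` gets the smallest neighbourhood `[γ, →) × [0, j]`, and a neighbourhood of `∞` must contain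
a tail `[β, →) × ℕ`. At `∞` the space is not core compact: the increasing open sets
`{∞} ∪ {(γ, j) | j < n ∨ β < γ}` cover it, but none contains `(β, n)`. It is injectively core
compact because an open superset of a neighbourhood `U ⊇ [b, →) × ℕ` of `∞` is determined by the
first points `≤ b` of its rows, so there are at most `𝔠 ^ ℵ₀ = 𝔠` of them. A family of filters
injected into them thus has at most `𝔠` members, each missing some neighbourhood of `∞`, and
since `cof B > 𝔠` these neighbourhoods contain a common tail, which misses the infimum filter.
-/

open Filter Set Topology OrderDual
open scoped Cardinal

universe u

theorem injCoreCompact_of_iInter_mem_nhds {Y : Type u} [TopologicalSpace Y]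
    (h : ∀ (x : Y) (U : Set Y), IsOpen U → x ∈ U → ∀ (ι : Type u) (N : ι → Set Y),
      #ι ≤ #{V : Set Y // IsOpen V ∧ U ⊆ V} → (∀ i, N i ∈ 𝓝 x) → ⋂ i, N i ∈ 𝓝 x) :
    InjCoreCompact Y := by
  intro x U hU hxU H θ hθ hθinj hadh hx
  have hsep : ∀ F ∈ H, ∃ N ∈ 𝓝 x, ∃ A ∈ F, N ∩ A = ∅ := by
    intro F hF
    have hxF : ¬ ClusterPt x F := fun hxF => (hadh F hF).subset ⟨hxF, (hθ F hF).2 hxU⟩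
    simpa [clusterPt_iff_nonempty, not_nonempty_iff_eq_empty] using hxF
  choose! N hN A hA hNA using hsep
  have hcard : #H ≤ #{V : Set Y // IsOpen V ∧ U ⊆ V} :=
    Cardinal.mk_le_of_injective (f := fun F : H => ⟨θ F, hθ F F.2⟩) fun F G hFG =>
      Subtype.ext (hθinj F.2 G.2 (congrArg Subtype.val hFG))
  have hA_mem : ⋃ F ∈ H, A F ∈ filterInfimum H :=
    mem_sSup.2 fun F hF => mem_of_superset (hA F hF) (subset_biUnion_of_mem hF)
  obtain ⟨y, hyN, hyA⟩ := clusterPt_iff_nonempty.1 hx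
    (h x U hU hxU H (fun F => N F) hcard fun F => hN F F.2) hA_mem
  obtain ⟨F, hF, hyF⟩ := mem_iUnion₂.1 hyA
  exact (hNA F hF).subset ⟨mem_iInter.1 hyN ⟨F, hF⟩, hyF⟩

theorem exists_forall_lt_of_mk_lt_cof {α ι : Type u} [LinearOrder α] (f : ι → α)
    (h : #ι < Order.cof α) : ∃ a, ∀ i, f i < a := by
  have hf : ¬ IsCofinal (range f) := fun hf =>
    ((Order.cof_le hf).trans Cardinal.mk_range_le).not_gt h
  obtain ⟨a, ha⟩ := not_isCofinal_iff.1 hf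
  exact ⟨a, fun i => ha _ (mem_range_self i)⟩

theorem Monotone.exists_sUnion_subset_of_subset_range {α : Type*} {M : ℕ → Set α}
    (hM : Monotone M) {G : Finset (Set α)} (hG : ↑G ⊆ range M) : ∃ n, ⋃₀ ↑G ⊆ M n := by
  classical
  obtain ⟨s, -, rfl⟩ := Finset.subset_set_image_iff.1 (image_univ (f := M) ▸ hG)
  obtain ⟨n, hn⟩ := s.exists_le
  refine ⟨n, sUnion_subset fun W hW => ?_⟩
  obtain ⟨m, hm, rfl⟩ := Finset.mem_image.1 hW
  exact hM (hn m hm)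

theorem Order.nonempty_of_lt_cof {α : Type u} [Preorder α] {c : Cardinal} (h : c < Order.cof α) :
    Nonempty α :=
  Order.cof_ne_zero_iff.1 (zero_le.trans_lt h).ne'

theorem Cardinal.lt_cof_toType_ord_succ {κ : Cardinal} (hκ : ℵ₀ ≤ κ) :
    κ < Order.cof (Order.succ κ).ord.ToType := by
  rw [Ordinal.cof_toType, (Cardinal.isRegular_succ hκ).cof_ord]
  exact Order.lt_succ κ

theorem Cardinal.mk_Iic_toType_ord_succ_le {κ : Cardinal} (hκ : ℵ₀ ≤ κ)
    (b : (Order.succ κ).ord.ToType) : #(Iic b) ≤ κ := by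
  have := Cardinal.noMaxOrder (hκ.trans (Order.le_succ κ))
  obtain ⟨c, hbc⟩ := exists_gt b
  have hc : #(Iio c) < Order.succ κ := by simpa using Cardinal.mk_Iio_lt c
  exact Order.lt_succ_iff.1 ((Cardinal.mk_le_mk_of_subset (Iic_subset_Iio.2 hbc)).trans_lt hc)

/-- `none` is the point at infinity; the second coordinate is reversed so that open sets are
upper sets of `B × ℕᵒᵈ`. -/
abbrev TailSpace (B : Type u) : Type u := Option (B × ℕᵒᵈ)

namespace TailSpace

variable {B : Type u}

section Preorder

variable [Preorder B]

instance : TopologicalSpace (TailSpace B) where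
  IsOpen S := IsUpperSet (some ⁻¹' S) ∧ (none ∈ S → ∀ᶠ γ in atTop, ∀ j, some (γ, j) ∈ S)
  isOpen_univ := ⟨isUpperSet_univ, fun _ => .of_forall fun _ _ => trivial⟩
  isOpen_inter S T hS hT :=
    ⟨hS.1.inter hT.1, fun h => ((hS.2 h.1).and (hT.2 h.2)).mono fun _ h j => ⟨h.1 j, h.2 j⟩⟩
  isOpen_sUnion 𝒮 h := by
    refine ⟨?_, ?_⟩
    · rw [preimage_sUnion]
      exact isUpperSet_iUnion₂ fun S hS => (h S hS).1
    · rintro ⟨S, hS, hnone⟩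
      exact ((h S hS).2 hnone).mono fun _ h j => ⟨S, hS, h j⟩

theorem isOpen_image_some {T : Set (B × ℕᵒᵈ)} (hT : IsUpperSet T) :
    IsOpen (some '' T : Set (TailSpace B)) := by
  refine ⟨?_, fun h => ?_⟩
  · rwa [preimage_image_eq _ (Option.some_injective _)]
  · simp at h

theorem isOpen_insert_none {T : Set (B × ℕᵒᵈ)} (hT : IsUpperSet T)
    (htail : ∀ᶠ γ in atTop, ∀ j, (γ, j) ∈ T) :
    IsOpen (insert none (some '' T) : Set (TailSpace B)) := by
  refine ⟨?_, fun _ => htail.mono fun γ hγ j => mem_insert_of_mem _ (mem_image_of_mem _ (hγ j))⟩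
  have hpre : some ⁻¹' insert none (some '' T) = T := by ext; simp
  rwa [hpre]

theorem nhds_some (p : B × ℕᵒᵈ) : 𝓝 (some p : TailSpace B) = 𝓟 (some '' Ici p) := by
  refine le_antisymm (le_principal_iff.2 <|
    (isOpen_image_some (isUpperSet_Ici p)).mem_nhds (mem_image_of_mem _ self_mem_Ici)) ?_
  rw [(nhds_basis_opens _).ge_iff]
  rintro V ⟨hpV, hV⟩
  rintro _ ⟨q, hpq, rfl⟩
  exact hV.1 hpq hpV

def tailNhd (b : B) : Set (TailSpace B) := insert none (some '' (Ici b ×ˢ Set.univ))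

theorem tailNhd_mem_nhds (b : B) : tailNhd b ∈ 𝓝 none :=
  IsOpen.mem_nhds (isOpen_insert_none ((isUpperSet_Ici b).prod isUpperSet_univ)
    ((eventually_ge_atTop b).mono fun _ hγ _ => ⟨hγ, trivial⟩)) (mem_insert _ _)

theorem tailNhd_anti : Antitone (tailNhd : B → Set (TailSpace B)) := fun _ _ h =>
  insert_subset_insert (image_mono (prod_mono (Ici_subset_Ici.2 h) subset_rfl))

end Preorder

instance [PartialOrder B] : T0Space (TailSpace B) := by
  refine (t0Space_iff_nhds_injective _).2 fun x y h => ?_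
  rcases x with _ | p <;> rcases y with _ | q
  · rfl
  · have := mem_of_mem_nhds (h ▸ nhds_some q ▸ mem_principal_self _ : _ ∈ 𝓝 none)
    simp at this
  · have := mem_of_mem_nhds (h ▸ nhds_some p ▸ mem_principal_self _ : _ ∈ 𝓝 none)
    simp at this
  · rw [nhds_some, nhds_some, principal_eq_iff_eq] at h
    exact congrArg some (Set.Ici_injective ((Option.some_injective _).image_injective h))

section LinearOrder

variable [LinearOrder B]

theorem exists_tailNhd_subset [Nonempty B] {N : Set (TailSpace B)} (hN : N ∈ 𝓝 none) :
    ∃ b, tailNhd b ⊆ N := by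
  obtain ⟨V, hVN, hV, hnone⟩ := mem_nhds_iff.1 hN
  obtain ⟨b, hb⟩ := eventually_atTop.1 (hV.2 hnone)
  refine ⟨b, insert_subset (hVN hnone) ?_⟩
  rintro _ ⟨⟨γ, j⟩, ⟨hγ, -⟩, rfl⟩
  exact hVN (hb γ hγ j)

theorem iInter_mem_nhds_none [Nonempty B] {ι : Type u} (hι : #ι < Order.cof B)
    {N : ι → Set (TailSpace B)} (hN : ∀ i, N i ∈ 𝓝 none) : ⋂ i, N i ∈ 𝓝 none := by
  choose b hb using fun i => exists_tailNhd_subset (hN i)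
  obtain ⟨c, hc⟩ := exists_forall_lt_of_mk_lt_cof b hι
  exact mem_of_superset (tailNhd_mem_nhds c)
    (subset_iInter fun i => (tailNhd_anti (hc i).le).trans (hb i))

theorem exists_threshold [WellFoundedLT B] {V : Set (TailSpace B)} (hV : IsOpen V) {b : B}
    {k : ℕᵒᵈ} (hb : some (b, k) ∈ V) : ∃ c ≤ b, ∀ γ, some (γ, k) ∈ V ↔ c ≤ γ := by
  obtain ⟨c, hc, hmin⟩ := wellFounded_lt.has_min {γ | some (γ, k) ∈ V} ⟨b, hb⟩
  refine ⟨c, not_lt.1 (hmin b hb), fun γ => ⟨fun hγ => not_lt.1 (hmin γ hγ), fun hcγ => ?_⟩⟩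
  exact hV.1 (show (c, k) ≤ (γ, k) from ⟨hcγ, le_rfl⟩) hc

theorem mk_openSupersets_le [WellFoundedLT B] {b : B} {U : Set (TailSpace B)}
    (hU : tailNhd b ⊆ U) : #{V : Set (TailSpace B) // IsOpen V ∧ U ⊆ V} ≤ #(Iic b) ^ ℵ₀ := by
  have hmem : ∀ k, some (b, k) ∈ U := fun k =>
    hU (mem_insert_of_mem _ ⟨_, ⟨le_rfl, trivial⟩, rfl⟩)
  choose c hcb hc using fun (V : {V : Set (TailSpace B) // IsOpen V ∧ U ⊆ V}) k =>
    exists_threshold V.2.1 (V.2.2 (hmem k))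
  have hpow : #(ℕᵒᵈ → Iic b) = #(Iic b) ^ ℵ₀ := by simp
  refine hpow ▸ Cardinal.mk_le_of_injective (f := fun V k => ⟨c V k, hcb V k⟩) fun V W hVW => ?_
  have hcVW : c V = c W := funext fun k => congrArg Subtype.val (congrFun hVW k)
  ext (_ | ⟨γ, k⟩)
  · exact iff_of_true (V.2.2 (hU (mem_insert _ _))) (W.2.2 (hU (mem_insert _ _)))
  · rw [hc, hc, hcVW]

theorem injCoreCompact [WellFoundedLT B] (hcof : 𝔠 < Order.cof B)
    (hsmall : ∀ b : B, #(Iic b) ≤ 𝔠) : InjCoreCompact (TailSpace B) := by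
  refine injCoreCompact_of_iInter_mem_nhds fun x U hU hxU ι N hι hN => ?_
  cases x with
  | some p =>
    simp only [nhds_some, mem_principal, subset_iInter_iff] at hN ⊢
    exact hN
  | none =>
    have : Nonempty B := Order.nonempty_of_lt_cof hcof
    obtain ⟨b, hb⟩ := exists_tailNhd_subset (hU.mem_nhds hxU)
    refine iInter_mem_nhds_none ?_ hN
    calc #ι ≤ #(Iic b) ^ ℵ₀ := hι.trans (mk_openSupersets_le hb)
      _ ≤ 𝔠 ^ ℵ₀ := Cardinal.power_le_power_right (hsmall b)
      _ = 𝔠 := Cardinal.continuum_power_aleph0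
      _ < Order.cof B := hcof

theorem not_coreCompact [Nonempty B] [NoMaxOrder B] : ¬ CoreCompact (TailSpace B) := by
  intro h
  obtain ⟨V, hV, hnone, hcover⟩ := h none univ isOpen_univ trivial
  obtain ⟨β, hβ⟩ := exists_tailNhd_subset (hV.mem_nhds hnone)
  set M : ℕ → Set (TailSpace B) := fun n => insert none (some '' {q | toDual n < q.2 ∨ β < q.1})
  have hM_open : ∀ n, IsOpen (M n) := fun n =>
    isOpen_insert_none (fun p q hpq hp => hp.imp (·.trans_le hpq.2) (·.trans_le hpq.1))
      ((eventually_gt_atTop β).mono fun γ hγ j => Or.inr hγ)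
  have hM_mono : Monotone M := fun m n hmn =>
    insert_subset_insert (image_mono fun _ hq => hq.imp_left (toDual_le_toDual.2 hmn).trans_lt)
  have hM_cover : univ ⊆ ⋃₀ range M := by
    rintro (_ | ⟨γ, j⟩) -
    · exact ⟨M 0, mem_range_self 0, mem_insert _ _⟩
    · have hj : toDual (ofDual j + 1) < j := toDual_lt.2 (Nat.lt_succ_self _)
      exact ⟨M (ofDual j + 1), mem_range_self _, mem_insert_of_mem _ ⟨_, Or.inl hj, rfl⟩⟩
  obtain ⟨G, hGM, hVG⟩ := hcover (range M) (forall_mem_range.2 hM_open) hM_cover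
  obtain ⟨n, hn⟩ := hM_mono.exists_sUnion_subset_of_subset_range hGM
  have := hn (hVG (hβ (mem_insert_of_mem _ ⟨(β, toDual n), ⟨le_rfl, trivial⟩, rfl⟩)))
  simp [M] at this

end LinearOrder

end TailSpace

/-- There exists a T₀ topological space that is injectively core compact but not
core compact. -/
theorem exists_t0_injCoreCompact_not_coreCompact :
    ∃ (X : Type) (t : TopologicalSpace X),
      @T0Space X t ∧ @InjCoreCompact X t ∧ ¬ @CoreCompact X t := by
  let B := (Order.succ 𝔠 : Cardinal.{0}).ord.ToType
  have hℵ₀ : ℵ₀ ≤ 𝔠 := Cardinal.aleph0_le_continuum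
  have hcof : 𝔠 < Order.cof B := Cardinal.lt_cof_toType_ord_succ hℵ₀
  have : Nonempty B := Order.nonempty_of_lt_cof hcof
  have : NoMaxOrder B := Cardinal.noMaxOrder (hℵ₀.trans (Order.le_succ _))
  exact ⟨TailSpace B, inferInstance, inferInstance,
    TailSpace.injCoreCompact hcof (Cardinal.mk_Iic_toType_ord_succ_le hℵ₀),
    TailSpace.not_coreCompact⟩
end

section
/- Let 𝔠⁺ denote the cardinal successor of the cardinality of the continuum, identified with the set of ordinals below it, and let X = (𝔠⁺ × ℤ) ∪ {∞} where ∞ ∉ 𝔠⁺ × ℤ. Topologize X by declaring as a subbase all sets S_{α,n} = {(β,k) : α ≤ β and n ≤ k} for (α,n) ∈ 𝔠⁺ × ℤ and all sets T_α = {(β,k) : α ≤ β, k ∈ ℤ} ∪ {∞} for α ∈ 𝔠⁺. Then X is a T₀ topological space that is not core compact (it fails core compactness at the point ∞). -/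
open TopologicalSpace
/-- A topological space is *core compact at* a point `x` if for every open `U ∋ x`
there is an open `V ∋ x` such that every open cover of `U` has a finite subfamily
covering `V`. -/
def CoreCompactAt (Y : Type*) [TopologicalSpace Y] (x : Y) : Prop :=
  ∀ U : Set Y, IsOpen U → x ∈ U →
    ∃ V : Set Y, IsOpen V ∧ x ∈ V ∧
      ∀ 𝒰 : Set (Set Y), (∀ W ∈ 𝒰, IsOpen W) → U ⊆ ⋃₀ 𝒰 →
        ∃ F : Finset (Set Y), ↑F ⊆ 𝒰 ∧ V ⊆ ⋃₀ ↑F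

/-- The set of ordinals below `𝔠⁺`, the cardinal successor of the continuum. -/
abbrev CPlus : Type 1 := ↥(Set.Iio ((Order.succ Cardinal.continuum).ord))

/-- The underlying set `X = (𝔠⁺ × ℤ) ∪ {∞}`, with `none` playing the role of `∞`. -/
abbrev JSpace : Type 1 := Option (CPlus × ℤ)

/-- The subbasic open set `S_{α,n} = {(β,k) : α ≤ β and n ≤ k}`. -/
def Ssub (α : CPlus) (n : ℤ) : Set JSpace :=
  {x | ∃ (β : CPlus) (k : ℤ), x = some (β, k) ∧ (α : Ordinal) ≤ (β : Ordinal) ∧ n ≤ k}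

/-- The subbasic open set `T_α = {(β,k) : α ≤ β, k ∈ ℤ} ∪ {∞}`. -/
def Tsub (α : CPlus) : Set JSpace :=
  {x | x = none ∨ ∃ (β : CPlus) (k : ℤ), x = some (β, k) ∧ (α : Ordinal) ≤ (β : Ordinal)}

/-- The topology on `X` generated by the subbase of all the sets `S_{α,n}` and `T_α`. -/
def jTop : TopologicalSpace JSpace :=
  TopologicalSpace.generateFrom
    ((Set.range fun p : CPlus × ℤ => Ssub p.1 p.2) ∪ Set.range Tsub)

/-! Every open neighbourhood of `∞` contains some `T_α`, hence the whole column `{α} × ℤ`.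
Cover `X` by `T_γ` for some `γ > α` together with all the `S_{β,n}`: each member of this cover
meets the column in a set of integers bounded below, so no finite subfamily covers the column,
let alone a neighbourhood of `∞`. -/

open Filter Topology

attribute [local instance] jTop

lemma CoreCompact.coreCompactAt {Y : Type*} [TopologicalSpace Y] (h : CoreCompact Y) (x : Y) :
    CoreCompactAt Y x :=
  fun U hU hx => h x U hU hx

lemma isSuccLimit_ord_succ_continuum : Order.IsSuccLimit (Order.succ Cardinal.continuum).ord :=
  Cardinal.isSuccLimit_ord (Cardinal.aleph0_le_continuum.trans (Order.le_succ _))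

instance : Nonempty CPlus := ⟨⟨0, isSuccLimit_ord_succ_continuum.bot_lt⟩⟩

instance : NoMaxOrder CPlus :=
  ⟨fun α => ⟨⟨Order.succ α, isSuccLimit_ord_succ_continuum.succ_lt α.2⟩,
    Order.lt_succ (α : Ordinal)⟩⟩

@[simp]
lemma some_mem_Ssub {α β : CPlus} {n k : ℤ} : some (β, k) ∈ Ssub α n ↔ α ≤ β ∧ n ≤ k := by
  simp [Ssub, - Subtype.exists]

@[simp]
lemma none_notMem_Ssub {α : CPlus} {n : ℤ} : none ∉ Ssub α n := by
  simp [Ssub]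

@[simp]
lemma some_mem_Tsub {α β : CPlus} {k : ℤ} : some (β, k) ∈ Tsub α ↔ α ≤ β := by
  simp [Tsub, - Subtype.exists]

@[simp]
lemma none_mem_Tsub {α : CPlus} : none ∈ Tsub α := by
  simp [Tsub]

lemma antitone_Tsub : Antitone Tsub := by
  rintro α γ hαγ (_ | ⟨β, k⟩) hx
  · exact none_mem_Tsub
  · exact some_mem_Tsub.2 (hαγ.trans (some_mem_Tsub.1 hx))

lemma isOpen_Ssub (α : CPlus) (n : ℤ) : IsOpen (Ssub α n) :=
  GenerateOpen.basic _ (Or.inl ⟨(α, n), rfl⟩)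

lemma isOpen_Tsub (α : CPlus) : IsOpen (Tsub α) :=
  GenerateOpen.basic _ (Or.inr ⟨α, rfl⟩)

lemma nhds_none_eq_iInf_Tsub : 𝓝 (none : JSpace) = ⨅ α, 𝓟 (Tsub α) := by
  have hsubbase :
      {s | none ∈ s ∧ s ∈ (Set.range fun p : CPlus × ℤ => Ssub p.1 p.2) ∪ Set.range Tsub} =
        Set.range Tsub := by
    ext s
    constructor
    · rintro ⟨hs, ⟨p, rfl⟩ | hT⟩
      · exact absurd hs none_notMem_Ssub
      · exact hT
    · rintro ⟨α, rfl⟩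
      exact ⟨none_mem_Tsub, Or.inr ⟨α, rfl⟩⟩
  rw [jTop, nhds_generateFrom, hsubbase, iInf_range]

lemma hasBasis_nhds_none : (𝓝 (none : JSpace)).HasBasis (fun _ => True) Tsub := by
  rw [nhds_none_eq_iInf_Tsub]
  exact hasBasis_iInf_principal antitone_Tsub.directed_ge

lemma not_inseparable_none_some (β : CPlus) (k : ℤ) :
    ¬ Inseparable (none : JSpace) (some (β, k)) := by
  intro h
  obtain ⟨γ, hβγ⟩ := exists_gt β
  exact hβγ.not_ge (some_mem_Tsub.1 ((h.mem_open_iff (isOpen_Tsub γ)).1 none_mem_Tsub))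

lemma t0Space_jTop : T0Space JSpace := by
  refine ⟨fun x y h => ?_⟩
  rcases x with _ | ⟨β, k⟩ <;> rcases y with _ | ⟨β', k'⟩
  · rfl
  · exact absurd h (not_inseparable_none_some β' k')
  · exact absurd h.symm (not_inseparable_none_some β k)
  · have h₁ := (h.mem_open_iff (isOpen_Ssub β k)).1 (some_mem_Ssub.2 ⟨le_rfl, le_rfl⟩)
    have h₂ := (h.mem_open_iff (isOpen_Ssub β' k')).2 (some_mem_Ssub.2 ⟨le_rfl, le_rfl⟩)
    rw [some_mem_Ssub] at h₁ h₂
    rw [le_antisymm h₁.1 h₂.1, le_antisymm h₁.2 h₂.2]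

lemma bddBelow_preimage_Ssub (α β : CPlus) (n : ℤ) :
    BddBelow ((fun k : ℤ => some (α, k)) ⁻¹' Ssub β n) :=
  ⟨n, fun _ hk => (some_mem_Ssub.1 hk).2⟩

lemma preimage_Tsub_eq_empty {α γ : CPlus} (h : α < γ) :
    (fun k : ℤ => some (α, k)) ⁻¹' Tsub γ = ∅ :=
  Set.eq_empty_of_forall_notMem fun _ hk => h.not_ge (some_mem_Tsub.1 hk)

lemma not_coreCompactAt_none : ¬ CoreCompactAt JSpace none := by
  intro h
  obtain ⟨V, hV, hnone, hcompact⟩ := h Set.univ isOpen_univ trivial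
  obtain ⟨α, -, hαV⟩ := hasBasis_nhds_none.mem_iff.1 (hV.mem_nhds hnone)
  obtain ⟨γ, hαγ⟩ := exists_gt α
  let 𝒰 := insert (Tsub γ) (Set.range fun p : CPlus × ℤ => Ssub p.1 p.2)
  have h𝒰open : ∀ W ∈ 𝒰, IsOpen W := by
    rintro W (rfl | ⟨p, rfl⟩)
    exacts [isOpen_Tsub γ, isOpen_Ssub p.1 p.2]
  have h𝒰cover : Set.univ ⊆ ⋃₀ 𝒰 := by
    rintro (_ | ⟨β, k⟩) -
    · exact ⟨Tsub γ, Or.inl rfl, none_mem_Tsub⟩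
    · exact ⟨Ssub β k, Or.inr ⟨(β, k), rfl⟩, by simp⟩
  have h𝒰bdd : ∀ W ∈ 𝒰, BddBelow ((fun k : ℤ => some (α, k)) ⁻¹' W) := by
    rintro W (rfl | ⟨p, rfl⟩)
    · simp [preimage_Tsub_eq_empty hαγ]
    · exact bddBelow_preimage_Ssub α p.1 p.2
  obtain ⟨F, hF𝒰, hVF⟩ := hcompact 𝒰 h𝒰open h𝒰cover
  have hbdd : BddBelow ((fun k : ℤ => some (α, k)) ⁻¹' ⋃₀ ↑F) := by
    rw [Set.preimage_sUnion]
    exact F.finite_toSet.bddBelow_biUnion.2 fun W hW => h𝒰bdd W (hF𝒰 hW)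
  have huniv : (fun k : ℤ => some (α, k)) ⁻¹' ⋃₀ ↑F = Set.univ :=
    Set.eq_univ_of_forall fun k => hVF (hαV (some_mem_Tsub.2 le_rfl))
  exact not_bddBelow_univ (huniv ▸ hbdd)

/-- The space `X = (𝔠⁺ × ℤ) ∪ {∞}` with the topology generated by the sets `S_{α,n}`
and `T_α` is a T₀ topological space that is not core compact; it fails core
compactness at the point `∞`. -/
theorem jSpace_t0_not_coreCompact :
    @T0Space JSpace jTop ∧
      ¬ @CoreCompactAt JSpace jTop (none : JSpace) ∧
      ¬ @CoreCompact JSpace jTop :=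
  ⟨t0Space_jTop, not_coreCompactAt_none, fun h => not_coreCompactAt_none (h.coreCompactAt none)⟩
end

section
/- Assume κ is an uncountable regular strong limit cardinal (a strongly inaccessible cardinal). Let X be the subspace of the ordinal space κ + 1 (the ordinals ≤ κ with the order topology) obtained by removing all limit ordinals except κ itself. Then X is a Hausdorff topological space that is injectively core compact but not locally compact (in particular X is not core compact). -/
/-!
All points except `κ` are isolated, and the sets `{y | a < y}`, `a < κ`, form a neighbourhood
base at `κ`. Regularity makes the intersection of fewer than `κ` neighbourhoods of `κ` again a
neighbourhood. If `U ∋ κ` is open, its complement is bounded below `κ`, so by the strong limit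
property `U` has fewer than `κ` supersets; a family `ℍ` injected into them is therefore small,
and the neighbourhoods of `x` witnessing `x ∉ adh ℋ` for the `ℋ ∈ ℍ` intersect to a single one
whose complement lies in the infimum of `ℍ`. At isolated points this works for families of any
size.

On the other hand, since `κ` is uncountable every neighbourhood `{y | a < y}` of `κ` contains the
infinitely many isolated points `a + n + 1 < a + ω < κ`, and the open cover of the space by
singletons and `{y | a + ω < y}` has no finite subfamily covering them.
-/

open TopologicalSpace
/-- The subspace of the ordinal space `κ + 1` (ordinals `≤ κ.ord`, order topology)
obtained by removing all limit ordinals except `κ` itself, with the subspace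
topology. -/
abbrev InaccSpace (κ : Cardinal.{0}) : Type 1 :=
  {o : Ordinal.{0} // o ≤ κ.ord ∧ (Order.IsSuccLimit o → o = κ.ord)}

open Cardinal Ordinal Set Filter Topology

theorem CoreCompact.of_locallyCompactSpace (X : Type*) [TopologicalSpace X]
    [LocallyCompactSpace X] : CoreCompact X := by
  intro x U hU hxU
  obtain ⟨K, hK, hKU, hKc⟩ := local_compact_nhds (hU.mem_nhds hxU)
  refine ⟨interior K, isOpen_interior, mem_interior_iff_mem_nhds.2 hK, fun 𝒰 h𝒰 hU𝒰 => ?_⟩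
  obtain ⟨𝒱, h𝒱𝒰, h𝒱, hK𝒱⟩ := hKc.elim_finite_subcover_image (c := id) h𝒰
    (by simpa [← sUnion_eq_biUnion] using hKU.trans hU𝒰)
  refine ⟨h𝒱.toFinset, by simpa using h𝒱𝒰, ?_⟩
  simpa [sUnion_eq_biUnion] using interior_subset.trans hK𝒱

theorem Set.Finite.of_subset_sUnion {α : Type*} {S : Set α} {𝒰 : Set (Set α)} (h𝒰 : 𝒰.Finite)
    (hS : S ⊆ ⋃₀ 𝒰) (hmeet : ∀ W ∈ 𝒰, (S ∩ W).Subsingleton) : S.Finite := by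
  refine (h𝒰.biUnion fun W hW => (hmeet W hW).finite).subset fun y hy => ?_
  obtain ⟨W, hW, hyW⟩ := hS hy
  exact mem_biUnion hW ⟨hy, hyW⟩

theorem Cardinal.mk_setOf_superset_le {α : Type*} (U : Set α) : #{W | U ⊆ W} ≤ 2 ^ #↥(Uᶜ) := by
  rw [← mk_set]
  refine mk_le_of_injective (f := fun W => ((↑) : ↥(Uᶜ) → α) ⁻¹' W.1) fun W₁ W₂ h => ?_
  ext y
  by_cases hy : y ∈ U
  · exact iff_of_true (W₁.2 hy) (W₂.2 hy)
  · exact Set.ext_iff.1 h ⟨y, hy⟩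

theorem not_clusterPt_sSup {X : Type*} [TopologicalSpace X] {x : X} {H : Set (Filter X)}
    {c : Cardinal} [CardinalInterFilter (𝓝 x) c] (hH : #H < c)
    (hx : ∀ F ∈ H, ¬ClusterPt x F) : ¬ClusterPt x (sSup H) := by
  simp only [clusterPt_iff_not_disjoint, not_not, (𝓝 x).basis_sets.disjoint_iff_left,
    id] at hx ⊢
  choose! W hW hWF using hx
  refine ⟨⋂ F ∈ H, W F, (cardinal_bInter_mem hH).2 hW, mem_sSup.2 fun F hF => ?_⟩
  exact mem_of_superset (hWF F hF) (compl_subset_compl.2 (biInter_subset_of_mem hF))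

theorem InjCoreCompact.of_cardinalInterFilter_nhds {X : Type*} [TopologicalSpace X]
    (h : ∀ x (U : Set X), IsOpen U → x ∈ U →
      ∃ c, CardinalInterFilter (𝓝 x) c ∧ #{W | U ⊆ W} < c) :
    InjCoreCompact X := by
  intro x U hU hxU H θ hθ hinj hadh
  obtain ⟨c, hc, hUc⟩ := h x U hU hxU
  have hH : #H < c := by
    refine lt_of_le_of_lt ?_ hUc
    rw [← mk_image_eq_of_injOn θ H hinj]
    exact mk_le_mk_of_subset fun W ⟨F, hF, hFW⟩ => hFW ▸ (hθ F hF).2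
  exact not_clusterPt_sSup hH fun F hF hxF =>
    (eq_empty_iff_forall_notMem.1 (hadh F hF)) x ⟨hxF, (hθ F hF).2 hxU⟩

theorem Cardinal.IsStrongPrelimit.lift {c : Cardinal.{u}} (hc : c.IsStrongPrelimit) :
    (lift.{v} c).IsStrongPrelimit := by
  intro x hx
  obtain ⟨x, hxc, rfl⟩ := lt_lift_iff.1 hx
  rw [← lift_two_power, lift_lt]
  exact hc hxc

namespace InaccSpace

variable {κ : Cardinal.{0}}

noncomputable def top (κ : Cardinal.{0}) : InaccSpace κ := ⟨κ.ord, le_rfl, fun _ => rfl⟩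

theorem isOpen_singleton_of_ne_top {y : InaccSpace κ} (hy : y ≠ top κ) : IsOpen {y} := by
  rw [← Subtype.val_injective.preimage_image {y}, image_singleton]
  exact (SuccOrder.isOpen_singleton_iff.2 fun hlim => hy (Subtype.ext (y.2.2 hlim))).preimage
    continuous_subtype_val

theorem isOpen_setOf_lt_val (a : Ordinal) : IsOpen {y : InaccSpace κ | a < y.val} :=
  isOpen_Ioi.preimage continuous_subtype_val

theorem hasBasis_nhds_top (hκ : ℵ₀ ≤ κ) :
    (𝓝 (top κ)).HasBasis (· < κ.ord) fun a => {y | a < y.val} := by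
  refine ⟨fun V => ⟨fun hV => ?_, fun ⟨a, ha, haV⟩ => mem_of_superset
    ((isOpen_setOf_lt_val a).mem_nhds ha) haV⟩⟩
  obtain ⟨O, hOV, hO, hO_top⟩ := mem_nhds_iff.1 hV
  obtain ⟨O', hO', rfl⟩ := isOpen_induced_iff.1 hO
  obtain ⟨a, ha, haO'⟩ := SuccOrder.isOpen_iff.1 hO' _ hO_top (isSuccLimit_ord hκ)
  refine ⟨a, ha, fun y hy => hOV ?_⟩
  rcases y.2.1.eq_or_lt with h | h
  · show y.val ∈ O'
    rw [h]
    exact hO_top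
  · exact haO' ⟨hy, h⟩

theorem cardinalInterFilter_nhds_top (hreg : κ.IsRegular) :
    CardinalInterFilter (𝓝 (top κ)) (lift.{1} κ) where
  cardinal_sInter_mem S hS hSnhds := by
    have hB := hasBasis_nhds_top hreg.aleph0_le
    choose! a ha haS using fun s hs => hB.mem_iff.1 (hSnhds s hs)
    have hsup : ⨆ s : S, a s < κ.ord := Ordinal.lift_iSup_lt_of_lt_cof
      (by rwa [← lift_cof, hreg.cof_ord, Cardinal.lift_uzero]) fun s => ha s s.2
    have hbdd : BddAbove (range fun s : S => a s) :=
      ⟨κ.ord, forall_mem_range.2 fun s => (ha s s.2).le⟩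
    refine hB.mem_iff.2 ⟨_, hsup, fun y hy => mem_sInter.2 fun s hs => haS s hs ?_⟩
    exact (le_ciSup hbdd ⟨s, hs⟩).trans_lt hy

theorem mk_compl_lt_of_mem_nhds_top (hκ : ℵ₀ ≤ κ) {U : Set (InaccSpace κ)}
    (hU : U ∈ 𝓝 (top κ)) : #↥(Uᶜ) < lift.{1} κ := by
  obtain ⟨a, ha, haU⟩ := (hasBasis_nhds_top hκ).mem_iff.1 hU
  calc #↥(Uᶜ) ≤ #↥(Subtype.val ⁻¹' Iio (Order.succ a) : Set (InaccSpace κ)) :=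
        mk_le_mk_of_subset fun y hy =>
          show y.val < _ from Order.lt_succ_iff.2 (not_lt.1 fun h => hy (haU h))
    _ ≤ #(Iio (Order.succ a)) := mk_preimage_of_injective _ _ Subtype.val_injective
    _ = lift.{1} (Order.succ a).card := Cardinal.mk_Iio_ordinal _
    _ < lift.{1} κ := lift_lt.2 (lt_ord.1 ((isSuccLimit_ord hκ).succ_lt ha))

theorem injCoreCompact (hreg : κ.IsRegular) (hsl : κ.IsStrongLimit) :
    InjCoreCompact (InaccSpace κ) := by
  refine InjCoreCompact.of_cardinalInterFilter_nhds fun x U hU hxU => ?_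
  by_cases hx : x = top κ
  · subst hx
    exact ⟨lift.{1} κ, cardinalInterFilter_nhds_top hreg, (mk_setOf_superset_le U).trans_lt
      (hsl.isStrongPrelimit.lift (mk_compl_lt_of_mem_nhds_top hreg.aleph0_le (hU.mem_nhds hxU)))⟩
  · refine ⟨Order.succ #{W | U ⊆ W}, ?_, Order.lt_succ _⟩
    rw [(isOpen_singleton_iff_nhds_eq_pure x).1 (isOpen_singleton_of_ne_top hx),
      ← principal_singleton]
    infer_instance

theorem infinite_setOf_lt_val_lt_add_omega0 {a : Ordinal} (ha : a + ω ≤ κ.ord) :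
    {y : InaccSpace κ | a < y.val ∧ y.val < a + ω}.Infinite := by
  have hlt (n : ℕ) : a + (n + 1 : ℕ) < a + ω := (add_lt_add_iff_left a).2 (natCast_lt_omega0 _)
  have hsucc (n : ℕ) : ¬Order.IsSuccLimit (a + (n + 1 : ℕ)) := by
    rw [Nat.cast_succ, ← add_assoc, ← Order.succ_eq_add_one]
    exact Order.not_isSuccLimit_succ _
  refine infinite_of_injective_forall_mem (f := fun n : ℕ =>
    (⟨a + (n + 1 : ℕ), (hlt n).le.trans ha, fun h => (hsucc n h).elim⟩ : InaccSpace κ))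
    (fun m n h => by simpa using congrArg Subtype.val h) fun n => ⟨?_, hlt n⟩
  exact lt_add_of_pos_right a (by exact_mod_cast n.succ_pos)

theorem not_coreCompact (hκ : ℵ₀ < κ) : ¬CoreCompact (InaccSpace κ) := by
  intro hcc
  obtain ⟨V, hVo, hV, hcov⟩ := hcc (top κ) Set.univ isOpen_univ trivial
  obtain ⟨a, ha, haV⟩ := (hasBasis_nhds_top hκ.le).mem_iff.1 (hVo.mem_nhds hV)
  have hω : a + ω < κ.ord := by
    rw [lt_ord, card_add, card_omega0]
    exact add_lt_of_lt hκ.le (lt_ord.1 ha) hκ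
  set 𝒰 := insert {y : InaccSpace κ | a + ω < y.val} {W | ∃ y ≠ top κ, W = {y}}
  have h𝒰 : ∀ W ∈ 𝒰, IsOpen W := by
    rintro W (rfl | ⟨y, hy, rfl⟩)
    exacts [isOpen_setOf_lt_val _, isOpen_singleton_of_ne_top hy]
  have h𝒰cov : Set.univ ⊆ ⋃₀ 𝒰 := by
    intro y _
    by_cases hy : y = top κ
    · exact ⟨_, mem_insert _ _, show a + ω < y.val from hy ▸ hω⟩
    · exact ⟨{y}, mem_insert_of_mem _ ⟨y, hy, rfl⟩, rfl⟩
  obtain ⟨𝒱, h𝒱𝒰, hV𝒱⟩ := hcov 𝒰 h𝒰 h𝒰cov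
  refine (infinite_setOf_lt_val_lt_add_omega0 hω.le).not_finite <|
    𝒱.finite_toSet.of_subset_sUnion (fun y hy => hV𝒱 (haV hy.1)) fun W hW => ?_
  rcases h𝒱𝒰 hW with rfl | ⟨y, -, rfl⟩
  · exact subsingleton_empty.anti fun y hy => (hy.1.2.asymm hy.2).elim
  · exact subsingleton_singleton.anti inter_subset_right

end InaccSpace

/-- If `κ` is an uncountable regular strong limit cardinal (i.e. strongly
inaccessible), then the subspace of `κ + 1` consisting of `κ` and the non-limit
ordinals is a Hausdorff space that is injectively core compact but not locally
compact; in particular it is not core compact. -/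
theorem inaccSpace_injCoreCompact_not_locallyCompact (κ : Cardinal.{0})
    (huncount : Cardinal.aleph0 < κ) (hreg : κ.IsRegular) (hsl : κ.IsStrongLimit) :
    T2Space (InaccSpace κ) ∧ InjCoreCompact (InaccSpace κ) ∧
      ¬ LocallyCompactSpace (InaccSpace κ) ∧ ¬ CoreCompact (InaccSpace κ) :=
  ⟨inferInstance, InaccSpace.injCoreCompact hreg hsl,
    fun _ => InaccSpace.not_coreCompact huncount (.of_locallyCompactSpace _),
    InaccSpace.not_coreCompact huncount⟩
end

section
/- Let X be a topological space. If X is infraconsonant and 𝒮 is a Scott-open subset of the product lattice O_X × O_X with (X,X) ∈ 𝒮, then there exists a Scott-open subset 𝒞 of O_X with X ∈ 𝒞 and 𝒞 × 𝒞 ⊆ 𝒮. -/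
open TopologicalSpace

/-- If `X` is infraconsonant and `𝒮` is Scott open in the product lattice `O_X × O_X`
with `(X, X) ∈ 𝒮`, then there is a Scott-open `𝒞 ⊆ O_X` with `X ∈ 𝒞` and
`𝒞 × 𝒞 ⊆ 𝒮`. -/
theorem infraconsonant_square_in_scottOpen {X : Type*} [TopologicalSpace X]
    (h : Infraconsonant X) (S : Set (Opens X × Opens X)) (hS : ScottOpen S)
    (hXX : ((⊤ : Opens X), (⊤ : Opens X)) ∈ S) :
    ∃ C : Set (Opens X), ScottOpen C ∧ (⊤ : Opens X) ∈ C ∧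
      ∀ c ∈ C, ∀ d ∈ C, (c, d) ∈ S := by
  set A : Set (Opens X) := {U | (U, U) ∈ S} with hA
  have hAscott : ScottOpen A := by
    constructor
    · intro U V hUV hU
      exact hS.1 (Prod.mk_le_mk.2 ⟨hUV, hUV⟩) hU
    · intro D hD hdir hsup
      set D' : Set (Opens X × Opens X) := (fun U => (U, U)) '' D with hD'
      have hsup' : sSup D' = (sSup D, sSup D) := by
        ext : 1 <;> simp only [Prod.fst_sSup, Prod.snd_sSup] <;>
          · congr 1; ext x; simp [hD']
      obtain ⟨p, hpD', hpS⟩ := hS.2 D' (hD.image _)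
        (by
          rintro _ ⟨a, ha, rfl⟩ _ ⟨b, hb, rfl⟩
          obtain ⟨c, hc, hac, hbc⟩ := hdir a ha b hb
          exact ⟨(c, c), ⟨c, hc, rfl⟩, ⟨hac, hac⟩, ⟨hbc, hbc⟩⟩)
        (by rw [hsup']; exact hsup)
      obtain ⟨u, hu, rfl⟩ := hpD'
      exact ⟨u, hu, hpS⟩
  obtain ⟨C, hCne, hCscott, hCC⟩ := h A ⟨⊤, hXX⟩ hAscott
  obtain ⟨c₀, hc₀⟩ := hCne
  refine ⟨C, hCscott, hCscott.1 le_top hc₀, fun c hc d hd => ?_⟩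
  have : c ⊓ d ∈ A := hCC ⟨c, hc, d, hd, rfl⟩
  exact hS.1 (Prod.mk_le_mk.2 ⟨inf_le_left, inf_le_right⟩) this
end
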